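/- arXiv:2510.21573 — 8 statements merged into one kernel-verified Lean document; each statement's English description precedes it below -/
import Mathlib

section
/- Fix integers n ≥ 1, 1 ≤ k ≤ n, and a strictly increasing k-tuple I in {1,…,n}. Then there exist a polynomial P ∈ ℚ[a_1,…,a_n,ħ] and, for each ordered pair (i,j) with 1 ≤ i,j ≤ n and i ≠ j, a nonnegative integer m_{ij}, such that in the field ℚ(a_1,…,a_n,ħ) one has S_I = P / ∏_{i≠j} (a_i − a_j + ħ)^{m_{ij}}. (In other words, all apparent poles of the localization sum S_I along the hyperplanes a_i = a_j cancel, so the nonequivariant limit a → 0 of S_I exists.) -/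
open Finset MvPolynomial

/-- The polynomial ring `ℚ[a_1,…,a_n,ħ]`. -/
abbrev APoly (n : ℕ) := MvPolynomial (Fin n ⊕ Unit) ℚ

/-- The variable `a_v` (0-based index `v`). -/
noncomputable def av {n : ℕ} (v : Fin n) : APoly n := X (Sum.inl v)

/-- The variable `ħ`. -/
noncomputable def hbar {n : ℕ} : APoly n := X (Sum.inr ())

/-- The field `ℚ(a_1,…,a_n,ħ)`. -/
abbrev AField (n : ℕ) := FractionRing (APoly n)

/-- Numerator of the `σ`-summand of the weight function `W(p_I)` after the substitution
`t_s := a_{j_s}`. -/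
noncomputable def wNum {n k : ℕ} (I J : Fin k → Fin n) (σ : Equiv.Perm (Fin k)) : APoly n :=
  ∏ r : Fin k,
    ((∏ α ∈ Finset.Iio (I r), (av α - av (J (σ r)))) *
      (∏ β ∈ Finset.Ioi (I r), (av (J (σ r)) - av β + hbar)))

/-- Denominator of the `σ`-summand of the weight function `W(p_I)` after the substitution
`t_s := a_{j_s}`. -/
noncomputable def wDen {n k : ℕ} (J : Fin k → Fin n) (σ : Equiv.Perm (Fin k)) : APoly n :=
  ∏ m : Fin k, ∏ l ∈ Finset.Iio m,
    (av (J (σ l)) - av (J (σ m))) * (av (J (σ l)) - av (J (σ m)) + hbar)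

/-- The restricted weight function `W(p_I)|_{p_J}`, obtained by substituting `t_s := a_{j_s}`
in the defining formula of `W(p_I)`. -/
noncomputable def Wres {n k : ℕ} (I J : Fin k → Fin n) : AField n :=
  ∑ σ : Equiv.Perm (Fin k),
    algebraMap (APoly n) (AField n) (wNum I J σ) / algebraMap (APoly n) (AField n) (wDen J σ)

/-- The Euler class `e(T_{p_J}X)`. -/
noncomputable def euler {n k : ℕ} (J : Fin k → Fin n) : APoly n :=
  ∏ v ∈ Finset.univ.filter (fun v : Fin n => ∀ p, J p ≠ v), ∏ p : Fin k,
    (av v - av (J p)) * (av (J p) - av v + hbar)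

/-- The localization sum `S_I`, over all strictly increasing `k`-tuples `J` in `{1,…,n}`. -/
noncomputable def Sloc (n k : ℕ) (I : Fin k → Fin n) : AField n :=
  ∑ J ∈ Finset.univ.filter (fun J : Fin k → Fin n => ∀ i j : Fin k, i < j → J i < J j),
    Wres I J / algebraMap (APoly n) (AField n) (euler J)

namespace NoPoles
variable {n : ℕ}

noncomputable def lin (i j : Fin n) : APoly n := av i - av j
noncomputable def rho (i j : Fin n) : APoly n := av i - av j + hbar

noncomputable def esub (i j : Fin n) : APoly n →ₐ[ℚ] APoly n :=
  aeval (fun s => if s = Sum.inl i then av j else X s)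

lemma esub_X (i j : Fin n) (s : Fin n ⊕ Unit) :
    esub i j (X s) = if s = Sum.inl i then av j else X s := by
  simp [esub, aeval_X]

lemma esub_av (i j x : Fin n) : esub i j (av x) = if x = i then av j else av x := by
  rw [av, esub_X]
  by_cases h : x = i <;> simp [h, av]

lemma esub_hbar (i j : Fin n) : esub i j (hbar : APoly n) = hbar := by
  rw [hbar, esub_X]; simp

lemma esub_lin (i j : Fin n) : esub i j (lin i j) = 0 := by
  simp [lin, map_sub, esub_av]

lemma dvd_sub_esub (i j : Fin n) (z : APoly n) : lin i j ∣ z - esub i j z := by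
  induction z using MvPolynomial.induction_on with
  | C a => simp [esub]
  | add p q hp hq =>
      have : p + q - esub i j (p + q) = (p - esub i j p) + (q - esub i j q) := by
        rw [map_add]; ring
      rw [this]; exact dvd_add hp hq
  | mul_X p s hp =>
      have : p * X s - esub i j (p * X s)
          = (p - esub i j p) * X s + esub i j p * (X s - esub i j (X s)) := by
        rw [map_mul]; ring
      rw [this]
      refine dvd_add (Dvd.dvd.mul_right hp _) (Dvd.dvd.mul_left ?_ _)
      rw [esub_X]
      by_cases h : s = Sum.inl i
      · subst h; simpa [lin, av] using dvd_refl _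
      · simp [h]

lemma lin_dvd_iff (i j : Fin n) (z : APoly n) : lin i j ∣ z ↔ esub i j z = 0 := by
  constructor
  · rintro ⟨w, rfl⟩
    rw [map_mul, esub_lin, zero_mul]
  · intro h
    have := dvd_sub_esub i j z
    rwa [h, sub_zero] at this

lemma lin_ne_zero {i j : Fin n} (hij : i ≠ j) : lin i j ≠ 0 := by
  intro h
  have := congrArg (MvPolynomial.eval (fun s => if s = Sum.inl i then (1:ℚ) else 0)) h
  simp [lin, av, hij, Ne.symm hij] at this

lemma rho_ne_zero (i j : Fin n) : rho i j ≠ 0 := by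
  intro h
  have := congrArg (MvPolynomial.eval (fun s => if s = Sum.inr () then (1:ℚ) else 0)) h
  simp [rho, av, hbar] at this

lemma prime_lin {i j : Fin n} (hij : i ≠ j) : Prime (lin i j) := by
  refine ⟨lin_ne_zero hij, ?_, ?_⟩
  · intro hu
    have h0 : esub i j (lin i j) = 0 := esub_lin i j
    have : IsUnit ((0 : APoly n)) := h0 ▸ hu.map (esub i j)
    exact not_isUnit_zero this
  · intro a b hab
    rw [lin_dvd_iff] at hab ⊢
    rw [lin_dvd_iff]
    rw [map_mul] at hab
    exact mul_eq_zero.mp hab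

lemma esub_lin_apply (i j x y : Fin n) :
    esub i j (lin x y) = lin (if x = i then j else x) (if y = i then j else y) := by
  by_cases hx : x = i <;> by_cases hy : y = i <;> simp [lin, map_sub, esub_av, hx, hy]

/-- classification of when `a_i - a_j` divides `a_x - a_y`. -/
lemma lin_dvd_lin {i j x y : Fin n} (hij : i ≠ j) (h : lin i j ∣ lin x y) :
    x = y ∨ (x = i ∧ y = j) ∨ (x = j ∧ y = i) := by
  rw [lin_dvd_iff, esub_lin_apply] at h
  by_contra hcon
  push_neg at hcon
  obtain ⟨h1, h2, h3⟩ := hcon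
  have hne : (if x = i then j else x) ≠ (if y = i then j else y) := by
    by_cases hx : x = i <;> by_cases hy : y = i
    · exact absurd (hx.trans hy.symm) h1
    · simp only [if_pos hx, if_neg hy]
      intro he; exact h2 hx he.symm
    · simp only [if_neg hx, if_pos hy]
      intro he; exact h3 he hy
    · simp only [if_neg hx, if_neg hy]; exact h1
  exact lin_ne_zero hne h

lemma lin_not_dvd_rho {i j : Fin n} (x y : Fin n) : ¬ lin i j ∣ rho x y := by
  rw [lin_dvd_iff]
  intro h
  rw [rho, map_add, map_sub, esub_hbar, esub_av, esub_av] at h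
  by_cases hx : x = i <;> by_cases hy : y = i <;>
    simp only [hx, hy, if_true, if_neg, if_pos] at h <;>
    first
      | exact rho_ne_zero _ _ h
      | (simp only [if_neg hx] at h; exact rho_ne_zero _ _ h)
      | (simp only [if_neg hy] at h; exact rho_ne_zero _ _ h)
      | (simp only [if_neg hx, if_neg hy] at h; exact rho_ne_zero _ _ h)

lemma lin_not_dvd_C {i j : Fin n} {s : ℚ} (hs : s ≠ 0) : ¬ lin i j ∣ (C s : APoly n) := by
  rw [lin_dvd_iff]
  intro h
  rw [esub, aeval_C] at h
  simp [hs] at h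

end NoPoles

namespace NoPoles
variable {n : ℕ}

noncomputable def phi (i j : Fin n) : APoly n →ₐ[ℚ] APoly n :=
  rename (Sum.map (Equiv.swap i j) id)

lemma phi_av (i j x : Fin n) : phi i j (av x) = av (Equiv.swap i j x) := by
  simp [phi, av, rename_X]

lemma phi_hbar (i j : Fin n) : phi i j (hbar : APoly n) = hbar := by
  simp [phi, hbar, rename_X]

lemma phi_lin (i j : Fin n) : phi i j (lin i j) = - lin i j := by
  rw [lin, map_sub, phi_av, phi_av, Equiv.swap_apply_left, Equiv.swap_apply_right]
  ring

lemma esub_av_swap (i j x : Fin n) :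
    esub i j (av ((Equiv.swap i j) x)) = esub i j (av x) := by
  rcases eq_or_ne x i with he | hxi
  · rw [he, Equiv.swap_apply_left, esub_av, esub_av, if_pos rfl]
    by_cases hji : j = i
    · rw [if_pos hji, hji]
    · rw [if_neg hji]
  · rcases eq_or_ne x j with he2 | hxj
    · rw [he2, Equiv.swap_apply_right, esub_av, esub_av, if_pos rfl, if_neg]
      intro h; exact hxi (he2.trans h) |>.elim
    · rw [Equiv.swap_apply_of_ne_of_ne hxi hxj]

lemma esub_comp_phi (i j : Fin n) (z : APoly n) : esub i j (phi i j z) = esub i j z := by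
  have : (esub i j).comp (phi i j) = esub i j := by
    apply MvPolynomial.algHom_ext
    intro s
    rcases s with x | u
    · simp only [AlgHom.comp_apply]
      rw [show (X (Sum.inl x) : APoly n) = av x from rfl, phi_av, esub_av_swap]
    · simp only [AlgHom.comp_apply]
      rw [show (X (Sum.inr u) : APoly n) = hbar from rfl, phi_hbar]
  exact AlgHom.congr_fun this z

lemma dvd_sub_phi (i j : Fin n) (z : APoly n) : lin i j ∣ z - phi i j z := by
  have h1 := dvd_sub_esub i j z
  have h2 := dvd_sub_esub i j (phi i j z)
  rw [esub_comp_phi] at h2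
  have : z - phi i j z = (z - esub i j z) - (phi i j z - esub i j z) := by ring
  rw [this]; exact dvd_sub h1 h2

lemma sq_dvd_add_phi {i j : Fin n} (z : APoly n) (h : lin i j ∣ z) :
    (lin i j) ^ 2 ∣ z + phi i j z := by
  obtain ⟨u, rfl⟩ := h
  have : lin i j * u + phi i j (lin i j * u) = lin i j * (u - phi i j u) := by
    rw [map_mul, phi_lin]; ring
  rw [this, sq]
  exact mul_dvd_mul_left _ (dvd_sub_phi i j u)

/-- `φ` transforms `wDen` as expected. -/
lemma phi_wDen {k : ℕ} (i j : Fin n) (J : Fin k → Fin n) (σ : Equiv.Perm (Fin k)) :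
    phi i j (wDen J σ) = wDen ((Equiv.swap i j) ∘ J) σ := by
  rw [wDen, wDen, map_prod]
  refine Finset.prod_congr rfl fun m _ => ?_
  rw [map_prod]
  refine Finset.prod_congr rfl fun l _ => ?_
  simp only [map_mul, map_add, map_sub, phi_av, phi_hbar, Function.comp_apply]

/-- `φ` transforms `euler` as expected. -/
lemma phi_euler {k : ℕ} (i j : Fin n) (J : Fin k → Fin n) :
    phi i j (euler J) = euler ((Equiv.swap i j) ∘ J) := by
  rw [euler, euler, map_prod]
  refine Finset.prod_nbij' (fun v => Equiv.swap i j v) (fun v => Equiv.swap i j v) ?_ ?_ ?_ ?_ ?_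
  · intro v hv
    simp only [mem_filter, mem_univ, true_and, Function.comp_apply] at hv ⊢
    intro p hp
    exact hv p ((Equiv.swap i j).injective hp)
  · intro v hv
    simp only [mem_filter, mem_univ, true_and, Function.comp_apply] at hv ⊢
    intro p hp
    exact hv p (by rw [hp, Equiv.swap_apply_self])
  · intro v _; simp
  · intro v _; simp
  · intro v _
    rw [map_prod]
    refine Finset.prod_congr rfl fun p _ => ?_
    simp only [map_mul, map_add, map_sub, phi_av, phi_hbar, Function.comp_apply]

/-- `wNum` is congruent mod `a_i - a_j` under the swap of `J`. -/
lemma wNum_swap_cong {k : ℕ} (i j : Fin n) (I J : Fin k → Fin n) (σ : Equiv.Perm (Fin k)) :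
    lin i j ∣ wNum I ((Equiv.swap i j) ∘ J) σ - wNum I J σ := by
  rw [lin_dvd_iff, map_sub, sub_eq_zero]
  rw [wNum, wNum, map_prod, map_prod]
  refine Finset.prod_congr rfl fun r _ => ?_
  rw [map_mul, map_mul, map_prod, map_prod, map_prod, map_prod]
  have key : esub i j (av ((Equiv.swap i j) (J (σ r)))) = esub i j (av (J (σ r))) :=
    esub_av_swap i j _
  congr 1
  · refine Finset.prod_congr rfl fun α _ => ?_
    rw [map_sub, map_sub, Function.comp_apply, key]
  · refine Finset.prod_congr rfl fun β _ => ?_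
    rw [map_add, map_add, map_sub, map_sub, Function.comp_apply, key]

end NoPoles

namespace NoPoles
variable {n k : ℕ}

/-- product with exactly one factor divisible by `lin i j`. -/
lemma one_lemma {β : Type*} [DecidableEq β] {i j : Fin n} (hij : i ≠ j) (s : Finset β)
    (g : β → APoly n) (b₀ : β) (hb : b₀ ∈ s) (h1 : lin i j ∣ g b₀)
    (h2 : ¬ (lin i j) ^ 2 ∣ g b₀) (h3 : ∀ b ∈ s, b ≠ b₀ → ¬ lin i j ∣ g b) :
    lin i j ∣ ∏ b ∈ s, g b ∧ ¬ (lin i j) ^ 2 ∣ ∏ b ∈ s, g b := by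
  have hprime := prime_lin hij
  have hrw : ∏ b ∈ s, g b = g b₀ * ∏ b ∈ s.erase b₀, g b := (Finset.mul_prod_erase s g hb).symm
  constructor
  · exact hrw ▸ Dvd.dvd.mul_right h1 _
  · rw [hrw]
    intro hsq
    have hR : ¬ lin i j ∣ ∏ b ∈ s.erase b₀, g b := by
      rw [hprime.dvd_finset_prod_iff]
      rintro ⟨b, hbmem, hdvd⟩
      exact h3 b (Finset.mem_of_mem_erase hbmem) (Finset.ne_of_mem_erase hbmem) hdvd
    obtain ⟨u, hu⟩ := h1
    rw [hu, mul_assoc, sq] at hsq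
    have := (mul_dvd_mul_iff_left (lin_ne_zero hij)).mp hsq
    rcases hprime.dvd_mul.mp this with h | h
    · exact h2 (by rw [hu, sq]; exact mul_dvd_mul_left _ h)
    · exact hR h

lemma mul_once {i j : Fin n} (hij : i ≠ j) {A B : APoly n} (h1 : lin i j ∣ A)
    (h2 : ¬ (lin i j) ^ 2 ∣ A) (h3 : ¬ lin i j ∣ B) :
    lin i j ∣ A * B ∧ ¬ (lin i j) ^ 2 ∣ A * B := by
  refine ⟨Dvd.dvd.mul_right h1 _, ?_⟩
  intro hsq
  obtain ⟨u, hu⟩ := h1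
  rw [hu, mul_assoc, sq] at hsq
  have := (mul_dvd_mul_iff_left (lin_ne_zero hij)).mp hsq
  rcases (prime_lin hij).dvd_mul.mp this with h | h
  · exact h2 (by rw [hu, sq]; exact mul_dvd_mul_left _ h)
  · exact h3 h

lemma wDen_eq_flat (J : Fin k → Fin n) (σ : Equiv.Perm (Fin k)) :
    wDen J σ = ∏ q ∈ (Finset.univ ×ˢ Finset.univ).filter (fun q : Fin k × Fin k => q.1 < q.2),
      ((av (J (σ q.1)) - av (J (σ q.2))) * (av (J (σ q.1)) - av (J (σ q.2)) + hbar)) := by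
  rw [Finset.prod_filter,
    Finset.prod_product_right' Finset.univ Finset.univ
      (fun l m => if l < m then
        (av (J (σ l)) - av (J (σ m))) * (av (J (σ l)) - av (J (σ m)) + hbar) else 1)]
  rw [wDen]
  refine Finset.prod_congr rfl fun m _ => ?_
  rw [← Finset.prod_filter]
  refine Finset.prod_congr ?_ fun l _ => rfl
  ext l
  simp [Finset.mem_Iio]

lemma euler_eq_flat (J : Fin k → Fin n) :
    euler J = ∏ q ∈ (Finset.univ.filter (fun v : Fin n => ∀ p, J p ≠ v)) ×ˢ (Finset.univ : Finset (Fin k)),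
      ((av q.1 - av (J q.2)) * (av (J q.2) - av q.1 + hbar)) := by
  rw [euler]
  exact (Finset.prod_product' _ _
    (fun v p => (av v - av (J p)) * (av (J p) - av v + hbar))).symm

/-- `lin i j` does not divide `wDen J σ` when `j` avoids the values of `J`. -/
lemma lin_not_dvd_wDen {i j : Fin n} (hij : i ≠ j) {J : Fin k → Fin n}
    (hJ : Function.Injective J) (σ : Equiv.Perm (Fin k))
    (hj : ∀ r, J r ≠ j) : ¬ lin i j ∣ wDen J σ := by
  rw [wDen_eq_flat, (prime_lin hij).dvd_finset_prod_iff]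
  rintro ⟨q, hqmem, hdvd⟩
  simp only [Finset.mem_filter] at hqmem
  rcases (prime_lin hij).dvd_mul.mp hdvd with h | h
  · rcases lin_dvd_lin hij h with he | ⟨h1, h2⟩ | ⟨h1, h2⟩
    · exact absurd (σ.injective (hJ he)) (ne_of_lt hqmem.2)
    · exact hj _ h2
    · exact hj _ h1
  · exact lin_not_dvd_rho _ _ h

/-- `lin i j` does not divide `euler J` when both `i` and `j` are values of `J`. -/
lemma lin_not_dvd_euler_both {i j : Fin n} (hij : i ≠ j) {J : Fin k → Fin n}
    {ri rj : Fin k} (hri : J ri = i) (hrj : J rj = j) : ¬ lin i j ∣ euler J := by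
  rw [euler_eq_flat, (prime_lin hij).dvd_finset_prod_iff]
  rintro ⟨q, hqmem, hdvd⟩
  simp only [Finset.mem_product, Finset.mem_filter, Finset.mem_univ, true_and] at hqmem
  rcases (prime_lin hij).dvd_mul.mp hdvd with h | h
  · rcases lin_dvd_lin hij h with he | ⟨h1, h2⟩ | ⟨h1, h2⟩
    · exact hqmem.1 q.2 he.symm
    · exact hqmem.1 ri (hri.trans h1.symm)
    · exact hqmem.1 rj (hrj.trans h1.symm)
  · exact lin_not_dvd_rho _ _ h

/-- the key one-factor lemma for `wDen`, both `i`, `j` values of `J`, ordered positions. -/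
lemma wDen_once_aux {i j : Fin n} (hij : i ≠ j) {J : Fin k → Fin n}
    (hJ : Function.Injective J) (σ : Equiv.Perm (Fin k)) {u w : Fin k} (huw : u < w)
    (hu : J (σ u) = i) (hw : J (σ w) = j) :
    lin i j ∣ wDen J σ ∧ ¬ (lin i j) ^ 2 ∣ wDen J σ := by
  rw [wDen_eq_flat]
  refine one_lemma hij _ _ (u, w) ?_ ?_ ?_ ?_
  · simp [huw]
  · rw [hu, hw]
    exact Dvd.dvd.mul_right dvd_rfl _
  · rw [hu, hw]
    intro hsq
    rw [sq] at hsq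
    have := (mul_dvd_mul_iff_left (lin_ne_zero hij)).mp
      (by simpa [lin] using hsq : lin i j * lin i j ∣ lin i j * (av i - av j + hbar))
    exact lin_not_dvd_rho i j this
  · rintro ⟨l, m⟩ hmem hne hdvd
    simp only [Finset.mem_filter] at hmem
    rcases (prime_lin hij).dvd_mul.mp hdvd with h | h
    · rcases lin_dvd_lin hij h with he | ⟨h1, h2⟩ | ⟨h1, h2⟩
      · exact absurd (σ.injective (hJ he)) (ne_of_lt hmem.2)
      · refine hne ?_
        have hl : l = u := σ.injective (hJ (h1.trans hu.symm))
        have hm : m = w := σ.injective (hJ (h2.trans hw.symm))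
        rw [hl, hm]
      · have hl : l = w := σ.injective (hJ (h1.trans hw.symm))
        have hm : m = u := σ.injective (hJ (h2.trans hu.symm))
        rw [hl, hm] at hmem
        exact absurd hmem.2 (not_lt.mpr (le_of_lt huw))
    · exact lin_not_dvd_rho _ _ h

/-- Exactly one `lin i j` factor in `E = wDen * euler` when both `i,j` are values. -/
lemma Efac_both {i j : Fin n} (hij : i ≠ j) {J : Fin k → Fin n}
    (hJ : Function.Injective J) (σ : Equiv.Perm (Fin k)) {ri rj : Fin k}
    (hri : J ri = i) (hrj : J rj = j) :
    lin i j ∣ wDen J σ * euler J ∧ ¬ (lin i j) ^ 2 ∣ wDen J σ * euler J := by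
  have hne : σ.symm ri ≠ σ.symm rj := by
    intro h
    exact hij (by rw [← hri, ← hrj, ← σ.apply_symm_apply ri, ← σ.apply_symm_apply rj, h])
  have heuler := lin_not_dvd_euler_both hij hri hrj
  rcases lt_or_gt_of_ne hne with hlt | hgt
  · have := wDen_once_aux hij hJ σ hlt (by simp [hri]) (by simp [hrj])
    exact mul_once hij this.1 this.2 heuler
  · have := wDen_once_aux hij.symm hJ σ hgt (by simp [hrj]) (by simp [hri])
    have h1 : lin i j ∣ wDen J σ := by
      have : lin j i ∣ wDen J σ := this.1
      rwa [show lin j i = -(lin i j) by simp only [lin]; ring, neg_dvd] at this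
    have h2 : ¬ (lin i j) ^ 2 ∣ wDen J σ := by
      intro h
      refine this.2 ?_
      rwa [show lin j i = -(lin i j) by simp only [lin]; ring, neg_sq]
    exact mul_once hij h1 h2 heuler

/-- Exactly one `lin i j` factor in `euler J` when `J p₀ = i` and `j` avoids `J`. -/
lemma euler_once {i j : Fin n} (hij : i ≠ j) {J : Fin k → Fin n}
    (hJ : Function.Injective J) {p₀ : Fin k} (hp : J p₀ = i) (hj : ∀ r, J r ≠ j) :
    lin i j ∣ euler J ∧ ¬ (lin i j) ^ 2 ∣ euler J := by
  rw [euler_eq_flat]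
  refine one_lemma hij _ _ (j, p₀) ?_ ?_ ?_ ?_
  · simp only [Finset.mem_product, Finset.mem_filter, Finset.mem_univ, true_and, and_true]
    exact hj
  · rw [hp]
    have : av j - av i = -(lin i j) := by simp only [lin]; ring
    rw [this]
    exact (dvd_neg.mpr dvd_rfl).mul_right _
  · rw [hp]
    intro hsq
    have h1 : av j - av i = -(lin i j) := by simp only [lin]; ring
    rw [h1, neg_mul, dvd_neg, sq] at hsq
    have := (mul_dvd_mul_iff_left (lin_ne_zero hij)).mp
      (by simpa [lin] using hsq : lin i j * lin i j ∣ lin i j * (av i - av j + hbar))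
    exact lin_not_dvd_rho i j this
  · rintro ⟨v, p⟩ hmem hne hdvd
    simp only [Finset.mem_product, Finset.mem_filter, Finset.mem_univ, true_and, and_true] at hmem
    rcases (prime_lin hij).dvd_mul.mp hdvd with h | h
    · rcases lin_dvd_lin hij h with he | ⟨h1, h2⟩ | ⟨h1, h2⟩
      · exact hmem p he.symm
      · exact hj p h2
      · refine hne ?_
        have hv : v = j := h1
        have hpp : p = p₀ := hJ (h2.trans hp.symm)
        rw [hv, hpp]
    · exact lin_not_dvd_rho _ _ h

/-- Exactly one `lin i j` factor in `E = wDen * euler` when exactly one of `i,j` is a value. -/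
lemma Efac_single {i j : Fin n} (hij : i ≠ j) {J : Fin k → Fin n}
    (hJ : Function.Injective J) (σ : Equiv.Perm (Fin k)) {p₀ : Fin k}
    (hp : J p₀ = i) (hj : ∀ r, J r ≠ j) :
    lin i j ∣ wDen J σ * euler J ∧ ¬ (lin i j) ^ 2 ∣ wDen J σ * euler J := by
  have h := euler_once hij hJ hp hj
  have hw := lin_not_dvd_wDen hij hJ σ hj
  have := mul_once hij h.1 h.2 hw
  rw [mul_comm] at this
  exact this

/-- Unified: if `i` or `j` is a value of injective `J` then `E` has exactly one `lin` factor. -/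
lemma Efac_once {i j : Fin n} (hij : i ≠ j) {J : Fin k → Fin n}
    (hJ : Function.Injective J) (σ : Equiv.Perm (Fin k))
    (hmem : (∃ r, J r = i) ∨ (∃ r, J r = j)) :
    lin i j ∣ wDen J σ * euler J ∧ ¬ (lin i j) ^ 2 ∣ wDen J σ * euler J := by
  by_cases hi : ∃ r, J r = i <;> by_cases hjj : ∃ r, J r = j
  · obtain ⟨ri, hri⟩ := hi
    obtain ⟨rj, hrj⟩ := hjj
    exact Efac_both hij hJ σ hri hrj
  · obtain ⟨ri, hri⟩ := hi
    exact Efac_single hij hJ σ hri (by push_neg at hjj; exact hjj)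
  · obtain ⟨rj, hrj⟩ := hjj
    have := Efac_single hij.symm hJ σ hrj (by push_neg at hi; exact hi)
    have e1 : lin j i = -(lin i j) := by simp only [lin]; ring
    constructor
    · have := this.1
      rwa [e1, neg_dvd] at this
    · intro h
      refine this.2 ?_
      rwa [e1, neg_sq]
  · rcases hmem with h | h <;> [exact absurd h hi; exact absurd h hjj]

/-- No `lin i j` factor when neither `i` nor `j` is a value. -/
lemma Efac_none {i j : Fin n} (hij : i ≠ j) {J : Fin k → Fin n}
    (hJ : Function.Injective J) (σ : Equiv.Perm (Fin k))
    (hi : ∀ r, J r ≠ i) (hj : ∀ r, J r ≠ j) :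
    ¬ lin i j ∣ wDen J σ * euler J := by
  intro h
  rcases (prime_lin hij).dvd_mul.mp h with h | h
  · exact lin_not_dvd_wDen hij hJ σ hj h
  · rw [euler_eq_flat, (prime_lin hij).dvd_finset_prod_iff] at h
    obtain ⟨q, hqmem, hdvd⟩ := h
    simp only [Finset.mem_product, Finset.mem_filter, Finset.mem_univ, true_and, and_true] at hqmem
    rcases (prime_lin hij).dvd_mul.mp hdvd with h | h
    · rcases lin_dvd_lin hij h with he | ⟨h1, h2⟩ | ⟨h1, h2⟩
      · exact hqmem q.2 he.symm
      · exact hj q.2 h2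
      · exact hi q.2 h2
    · exact lin_not_dvd_rho _ _ h

/-- nonvanishing of `wDen` and `euler` for injective `J`. -/
lemma wDen_ne_zero {J : Fin k → Fin n} (hJ : Function.Injective J) (σ : Equiv.Perm (Fin k)) :
    wDen J σ ≠ 0 := by
  rw [wDen]
  rw [Finset.prod_ne_zero_iff]
  intro m _
  rw [Finset.prod_ne_zero_iff]
  intro l hl
  have hne : J (σ l) ≠ J (σ m) := fun h =>
    absurd (σ.injective (hJ h)) (ne_of_lt (Finset.mem_Iio.mp hl))
  exact mul_ne_zero (lin_ne_zero hne) (rho_ne_zero _ _)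

lemma euler_ne_zero (J : Fin k → Fin n) : euler J ≠ 0 := by
  rw [euler, Finset.prod_ne_zero_iff]
  intro v hv
  rw [Finset.prod_ne_zero_iff]
  intro p _
  simp only [Finset.mem_filter, Finset.mem_univ, true_and] at hv
  exact mul_ne_zero (lin_ne_zero (fun h => hv p h.symm)) (rho_ne_zero _ _)


section Orbit
variable {n k : ℕ}

noncomputable def sortOf (J : Fin k → Fin n) : Fin k → Fin n :=
  if h : (Finset.image J Finset.univ).card = k
    then ⇑((Finset.image J Finset.univ).orderEmbOfFin h) else J

lemma card_image_of_inj {J : Fin k → Fin n} (hJ : Function.Injective J) :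
    (Finset.image J Finset.univ).card = k := by
  rw [Finset.card_image_of_injective _ hJ, Finset.card_univ, Fintype.card_fin]

lemma sortOf_strictMono {J : Fin k → Fin n} (hJ : Function.Injective J) :
    StrictMono (sortOf J) := by
  rw [sortOf, dif_pos (card_image_of_inj hJ)]
  exact (Finset.orderEmbOfFin _ _).strictMono

lemma image_comp_perm (K : Fin k → Fin n) (ρ : Equiv.Perm (Fin k)) :
    Finset.image (K ∘ ⇑ρ) Finset.univ = Finset.image K Finset.univ := by
  ext x
  simp only [Finset.mem_image, Finset.mem_univ, true_and, Function.comp_apply]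
  constructor
  · rintro ⟨a, rfl⟩; exact ⟨ρ a, rfl⟩
  · rintro ⟨a, rfl⟩; exact ⟨ρ.symm a, by rw [Equiv.apply_symm_apply]⟩

lemma sortOf_comp_eq {K : Fin k → Fin n} (hK : StrictMono K) (ρ : Equiv.Perm (Fin k)) :
    sortOf (K ∘ ⇑ρ) = K := by
  have hc : (Finset.image (K ∘ ⇑ρ) Finset.univ).card = k :=
    card_image_of_inj (hK.injective.comp ρ.injective)
  rw [sortOf, dif_pos hc]
  refine (Finset.orderEmbOfFin_unique hc ?_ hK).symm
  intro x
  rw [image_comp_perm]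
  exact Finset.mem_image.mpr ⟨x, Finset.mem_univ x, rfl⟩

lemma exists_perm {J : Fin k → Fin n} (hJ : Function.Injective J) :
    ∃ ρ : Equiv.Perm (Fin k), J = sortOf J ∘ ⇑ρ := by
  set s := Finset.image J Finset.univ with hs
  have h : s.card = k := card_image_of_inj hJ
  have hK : sortOf J = ⇑(s.orderEmbOfFin h) := by rw [sortOf, dif_pos h]
  have hb1 : Function.Bijective (fun r : Fin k => (⟨J r, by
      exact Finset.mem_image.mpr ⟨r, Finset.mem_univ r, rfl⟩⟩ : {x // x ∈ s})) := by
    rw [Fintype.bijective_iff_injective_and_card]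
    constructor
    · intro a b hab
      exact hJ (congrArg Subtype.val hab)
    · rw [Fintype.card_fin, Fintype.card_coe, h]
  have hb2 : Function.Bijective (fun r : Fin k => (⟨s.orderEmbOfFin h r,
      Finset.orderEmbOfFin_mem s h r⟩ : {x // x ∈ s})) := by
    rw [Fintype.bijective_iff_injective_and_card]
    constructor
    · intro a b hab
      exact (s.orderEmbOfFin h).injective (congrArg Subtype.val hab)
    · rw [Fintype.card_fin, Fintype.card_coe, h]
  refine ⟨(Equiv.ofBijective _ hb1).trans (Equiv.ofBijective _ hb2).symm, ?_⟩
  funext r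
  rw [hK]
  have : (Equiv.ofBijective _ hb2) ((Equiv.ofBijective _ hb2).symm ((Equiv.ofBijective _ hb1) r))
      = (Equiv.ofBijective _ hb1) r := Equiv.apply_symm_apply _ _
  have hval := congrArg Subtype.val this
  exact hval.symm

end Orbit

section Main1
variable {n k : ℕ}

lemma wNum_comp (I K : Fin k → Fin n) (ρ σ : Equiv.Perm (Fin k)) :
    wNum I (K ∘ ⇑ρ) σ = wNum I K (ρ * σ) := by
  rw [wNum, wNum]
  refine Finset.prod_congr rfl fun r _ => ?_
  simp only [Function.comp_apply, Equiv.Perm.mul_apply]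

lemma wDen_comp (K : Fin k → Fin n) (ρ σ : Equiv.Perm (Fin k)) :
    wDen (K ∘ ⇑ρ) σ = wDen K (ρ * σ) := by
  rw [wDen, wDen]
  refine Finset.prod_congr rfl fun m _ => Finset.prod_congr rfl fun l _ => ?_
  simp only [Function.comp_apply, Equiv.Perm.mul_apply]

lemma euler_comp (K : Fin k → Fin n) (ρ : Equiv.Perm (Fin k)) :
    euler (K ∘ ⇑ρ) = euler K := by
  rw [euler, euler]
  refine Finset.prod_congr ?_ fun v _ => ?_
  · apply Finset.filter_congr
    intro v _
    simp only [Function.comp_apply, eq_iff_iff]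
    constructor
    · intro hv p
      have := hv (ρ.symm p)
      rwa [Equiv.apply_symm_apply] at this
    · intro hv p
      exact hv (ρ p)
  · exact Equiv.prod_comp ρ (fun p => (av v - av (K p)) * (av (K p) - av v + hbar))

lemma Wres_comp (I K : Fin k → Fin n) (ρ : Equiv.Perm (Fin k)) :
    Wres I (K ∘ ⇑ρ) = Wres I K := by
  rw [Wres, Wres]
  rw [show (∑ σ : Equiv.Perm (Fin k),
      algebraMap (APoly n) (AField n) (wNum I (K ∘ ⇑ρ) σ) /
        algebraMap (APoly n) (AField n) (wDen (K ∘ ⇑ρ) σ))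
    = ∑ σ : Equiv.Perm (Fin k),
      algebraMap (APoly n) (AField n) (wNum I K ((Equiv.mulLeft ρ) σ)) /
        algebraMap (APoly n) (AField n) (wDen K ((Equiv.mulLeft ρ) σ)) from
    Finset.sum_congr rfl fun σ _ => by rw [wNum_comp, wDen_comp, Equiv.coe_mulLeft]]
  exact Equiv.sum_comp (Equiv.mulLeft ρ) (fun τ =>
    algebraMap (APoly n) (AField n) (wNum I K τ) / algebraMap (APoly n) (AField n) (wDen K τ))

end Main1

section Main2
variable {n k : ℕ}

noncomputable def InjF (n k : ℕ) : Finset (Fin k → Fin n) :=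
  Finset.univ.filter (fun J => Function.Injective J)

noncomputable def FJ (I J : Fin k → Fin n) : AField n :=
  Wres I J / algebraMap (APoly n) (AField n) (euler J)

lemma FJ_comp (I K : Fin k → Fin n) (ρ : Equiv.Perm (Fin k)) :
    FJ I (K ∘ ⇑ρ) = FJ I K := by
  rw [FJ, FJ, Wres_comp, euler_comp]

/-- The sum over injective tuples is `k!` times the sum over increasing tuples. -/
lemma main1 (I : Fin k → Fin n) :
    algebraMap (APoly n) (AField n) (C (k.factorial : ℚ)) * Sloc n k I
      = ∑ J ∈ InjF n k, FJ I J := by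
  have hmap : ∀ J ∈ InjF n k, sortOf J ∈
      Finset.univ.filter (fun J : Fin k → Fin n => ∀ i j : Fin k, i < j → J i < J j) := by
    intro J hJ
    rw [InjF, Finset.mem_filter] at hJ
    simp only [Finset.mem_filter, Finset.mem_univ, true_and]
    intro a b hab
    exact sortOf_strictMono hJ.2 hab
  rw [← Finset.sum_fiberwise_of_maps_to hmap (fun J => FJ I J)]
  have fiber_eq : ∀ K ∈ Finset.univ.filter
      (fun J : Fin k → Fin n => ∀ i j : Fin k, i < j → J i < J j),
      ∑ J ∈ (InjF n k).filter (fun J => sortOf J = K), FJ I J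
        = (k.factorial : ℕ) • FJ I K := by
    intro K hK
    simp only [Finset.mem_filter, Finset.mem_univ, true_and] at hK
    have hKmono : StrictMono K := fun a b hab => hK a b hab
    have : ∑ ρ ∈ (Finset.univ : Finset (Equiv.Perm (Fin k))), FJ I (K ∘ ⇑ρ)
        = ∑ J ∈ (InjF n k).filter (fun J => sortOf J = K), FJ I J := by
      refine Finset.sum_bij (fun ρ _ => K ∘ ⇑ρ) ?_ ?_ ?_ ?_
      · intro ρ _
        simp only [Finset.mem_filter, InjF, Finset.mem_univ, true_and]
        exact ⟨hKmono.injective.comp ρ.injective, sortOf_comp_eq hKmono ρ⟩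
      · intro ρ₁ _ ρ₂ _ hcomp
        exact Equiv.ext fun r => hKmono.injective (congrFun hcomp r)
      · intro J hJ
        simp only [Finset.mem_filter, InjF, Finset.mem_univ, true_and] at hJ
        obtain ⟨ρ, hρ⟩ := exists_perm hJ.1
        refine ⟨ρ, Finset.mem_univ ρ, ?_⟩
        show K ∘ ⇑ρ = J
        rw [← hJ.2]
        exact hρ.symm
      · intro ρ _; rfl
    rw [← this]
    rw [Finset.sum_congr rfl (fun ρ _ => FJ_comp I K ρ), Finset.sum_const, Finset.card_univ]
    congr 1
    exact Fintype.card_perm.trans (by rw [Fintype.card_fin])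
  rw [Finset.sum_congr rfl fiber_eq]
  rw [Finset.sum_congr rfl (fun K _ => nsmul_eq_mul (α := AField n) k.factorial (FJ I K))]
  rw [← Finset.mul_sum, Sloc]
  congr 1
  rw [map_natCast (C : ℚ →+* APoly n) k.factorial]
  exact (map_natCast (algebraMap (APoly n) (AField n)) k.factorial)

/-- expand each `FJ` into a sum over permutations with merged denominator. -/
lemma main2 (I : Fin k → Fin n) :
    ∑ J ∈ InjF n k, FJ I J
      = ∑ t ∈ (InjF n k) ×ˢ (Finset.univ : Finset (Equiv.Perm (Fin k))),
          algebraMap (APoly n) (AField n) (wNum I t.1 t.2) /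
            algebraMap (APoly n) (AField n) (wDen t.1 t.2 * euler t.1) := by
  rw [Finset.sum_product]
  refine Finset.sum_congr rfl fun J _ => ?_
  rw [FJ, Wres, Finset.sum_div]
  refine Finset.sum_congr rfl fun σ _ => ?_
  rw [div_div, map_mul]

end Main2

section Cancel
variable {n k : ℕ}

noncomputable def TT (n k : ℕ) : Finset ((Fin k → Fin n) × Equiv.Perm (Fin k)) :=
  (InjF n k) ×ˢ Finset.univ

noncomputable def Nt (I : Fin k → Fin n) (t : (Fin k → Fin n) × Equiv.Perm (Fin k)) : APoly n :=
  wNum I t.1 t.2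

noncomputable def Et (t : (Fin k → Fin n) × Equiv.Perm (Fin k)) : APoly n :=
  wDen t.1 t.2 * euler t.1

noncomputable def NumD (n k : ℕ) (I : Fin k → Fin n) : APoly n :=
  ∑ t ∈ TT n k, Nt I t * ∏ s ∈ (TT n k).erase t, Et s

noncomputable def DenD (n k : ℕ) : APoly n := ∏ t ∈ TT n k, Et t

lemma mem_TT_inj {t : (Fin k → Fin n) × Equiv.Perm (Fin k)} (ht : t ∈ TT n k) :
    Function.Injective t.1 := by
  rw [TT, Finset.mem_product, InjF, Finset.mem_filter] at ht
  exact ht.1.2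

lemma Et_ne_zero {t : (Fin k → Fin n) × Equiv.Perm (Fin k)} (ht : t ∈ TT n k) : Et t ≠ 0 :=
  mul_ne_zero (wDen_ne_zero (mem_TT_inj ht) t.2) (euler_ne_zero t.1)

/-- common denominator form. -/
lemma main3 (I : Fin k → Fin n) :
    ∑ t ∈ TT n k, algebraMap (APoly n) (AField n) (Nt I t) /
        algebraMap (APoly n) (AField n) (Et t)
      = algebraMap (APoly n) (AField n) (NumD n k I) /
          algebraMap (APoly n) (AField n) (DenD n k) := by
  have halg : Function.Injective (algebraMap (APoly n) (AField n)) :=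
    IsFractionRing.injective _ _
  rw [NumD, map_sum, Finset.sum_div]
  refine Finset.sum_congr rfl fun t ht => ?_
  have herase : algebraMap (APoly n) (AField n) (∏ s ∈ (TT n k).erase t, Et s) ≠ 0 := by
    rw [(map_ne_zero_iff _ halg)]
    exact Finset.prod_ne_zero_iff.mpr fun s hs => Et_ne_zero (Finset.mem_of_mem_erase hs)
  have hden : DenD n k = Et t * ∏ s ∈ (TT n k).erase t, Et s :=
    (Finset.mul_prod_erase _ _ ht).symm
  rw [hden, map_mul, map_mul]
  exact (mul_div_mul_right _ _ herase).symm

/-- the pairing involution. -/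
noncomputable def eps (i j : Fin n) (t : (Fin k → Fin n) × Equiv.Perm (Fin k)) :
    (Fin k → Fin n) × Equiv.Perm (Fin k) :=
  (⇑(Equiv.swap i j) ∘ t.1, t.2)

lemma eps_eps (i j : Fin n) (t : (Fin k → Fin n) × Equiv.Perm (Fin k)) :
    eps i j (eps i j t) = t := by
  rw [eps, eps]
  refine Prod.ext ?_ rfl
  funext r
  exact Equiv.swap_apply_self i j (t.1 r)

lemma eps_mem (i j : Fin n) {t : (Fin k → Fin n) × Equiv.Perm (Fin k)} (ht : t ∈ TT n k) :
    eps i j t ∈ TT n k := by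
  rw [TT, Finset.mem_product, InjF, Finset.mem_filter] at ht ⊢
  exact ⟨⟨Finset.mem_univ _, (Equiv.swap i j).injective.comp ht.1.2⟩, Finset.mem_univ _⟩

lemma eps_fixed_iff {i j : Fin n} (hij : i ≠ j) (t : (Fin k → Fin n) × Equiv.Perm (Fin k)) :
    eps i j t = t ↔ (∀ r, t.1 r ≠ i) ∧ (∀ r, t.1 r ≠ j) := by
  constructor
  · intro h
    have hfst : ⇑(Equiv.swap i j) ∘ t.1 = t.1 := congrArg Prod.fst h
    constructor
    · intro r hri
      have := congrFun hfst r
      rw [Function.comp_apply, hri, Equiv.swap_apply_left] at this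
      exact hij this.symm
    · intro r hrj
      have := congrFun hfst r
      rw [Function.comp_apply, hrj, Equiv.swap_apply_right] at this
      exact hij this
  · rintro ⟨hi, hj⟩
    rw [eps]
    refine Prod.ext ?_ rfl
    funext r
    exact Equiv.swap_apply_of_ne_of_ne (hi r) (hj r)

noncomputable def T1 (n k : ℕ) (i j : Fin n) : Finset ((Fin k → Fin n) × Equiv.Perm (Fin k)) :=
  (TT n k).filter (fun t => eps i j t ≠ t)

lemma Et_once_of_T1 {i j : Fin n} (hij : i ≠ j)
    {t : (Fin k → Fin n) × Equiv.Perm (Fin k)} (ht : t ∈ T1 n k i j) :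
    lin i j ∣ Et t ∧ ¬ (lin i j) ^ 2 ∣ Et t := by
  rw [T1, Finset.mem_filter] at ht
  have hJ := mem_TT_inj ht.1
  have hmem : (∃ r, t.1 r = i) ∨ (∃ r, t.1 r = j) := by
    by_contra hcon
    push_neg at hcon
    exact ht.2 ((eps_fixed_iff hij t).mpr ⟨hcon.1, hcon.2⟩)
  exact Efac_once hij hJ t.2 hmem

lemma Et_not_dvd_of_fixed {i j : Fin n} (hij : i ≠ j)
    {t : (Fin k → Fin n) × Equiv.Perm (Fin k)} (ht : t ∈ TT n k) (hfix : eps i j t = t) :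
    ¬ lin i j ∣ Et t := by
  obtain ⟨hi, hj⟩ := (eps_fixed_iff hij t).mp hfix
  exact Efac_none hij (mem_TT_inj ht) t.2 hi hj

lemma pow_card_dvd_prod {i j : Fin n} (hij : i ≠ j)
    (S S' : Finset ((Fin k → Fin n) × Equiv.Perm (Fin k)))
    (hS : S ⊆ T1 n k i j) (hSS : S ⊆ S') :
    (lin i j) ^ S.card ∣ ∏ s ∈ S', Et s := by
  have h1 : (lin i j) ^ S.card = ∏ _s ∈ S, lin i j := by
    rw [Finset.prod_const]
  rw [h1]
  refine dvd_trans (Finset.prod_dvd_prod_of_dvd _ _ fun s hs => ?_)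
    (Finset.prod_dvd_prod_of_subset _ _ _ hSS)
  exact (Et_once_of_T1 hij (hS hs)).1

lemma Et_eps (i j : Fin n) (t : (Fin k → Fin n) × Equiv.Perm (Fin k)) :
    Et (eps i j t) = phi i j (Et t) := by
  rw [Et, Et, eps, map_mul, phi_wDen, phi_euler]

lemma pair_dvd {i j : Fin n} (hij : i ≠ j) (I : Fin k → Fin n)
    {t : (Fin k → Fin n) × Equiv.Perm (Fin k)} (ht : t ∈ T1 n k i j) :
    (lin i j) ^ 2 ∣ Nt I t * Et (eps i j t) + Nt I (eps i j t) * Et t := by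
  have hE : lin i j ∣ Et t := (Et_once_of_T1 hij ht).1
  have hN : lin i j ∣ Nt I (eps i j t) - Nt I t := wNum_swap_cong i j I t.1 t.2
  have hkey : Nt I t * Et (eps i j t) + Nt I (eps i j t) * Et t
      = Nt I t * (Et t + phi i j (Et t)) + (Nt I (eps i j t) - Nt I t) * Et t := by
    rw [Et_eps]; ring
  rw [hkey]
  refine dvd_add (Dvd.dvd.mul_left (sq_dvd_add_phi _ hE) _) ?_
  rw [sq]
  exact mul_dvd_mul hN hE

/-- fixed terms contribute a multiple of `lin ^ c`. -/
lemma fixed_term_dvd {i j : Fin n} (hij : i ≠ j) (I : Fin k → Fin n)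
    {t : (Fin k → Fin n) × Equiv.Perm (Fin k)} (ht : t ∈ TT n k) (hfix : eps i j t = t) :
    (lin i j) ^ (T1 n k i j).card ∣ Nt I t * ∏ s ∈ (TT n k).erase t, Et s := by
  refine Dvd.dvd.mul_left ?_ _
  refine pow_card_dvd_prod hij _ _ (le_refl _) ?_
  intro s hs
  rw [T1, Finset.mem_filter] at hs
  rw [Finset.mem_erase]
  refine ⟨?_, hs.1⟩
  intro hst
  exact hs.2 (hst ▸ hfix)

/-- THE cancellation theorem. -/
theorem cancel {i j : Fin n} (hij : i ≠ j) (I : Fin k → Fin n) :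
    (lin i j) ^ (T1 n k i j).card ∣ NumD n k I := by
  classical
  set c := (T1 n k i j).card with hc
  set Idl := Ideal.span ({(lin i j) ^ c} : Set (APoly n)) with hIdl
  have hzero : ∀ z : APoly n, (lin i j) ^ c ∣ z → Ideal.Quotient.mk Idl z = 0 := by
    intro z hz
    rw [Ideal.Quotient.eq_zero_iff_mem, hIdl, Ideal.mem_span_singleton]
    exact hz
  rw [← Ideal.mem_span_singleton, ← hIdl, ← Ideal.Quotient.eq_zero_iff_mem, NumD, map_sum]
  refine Finset.sum_involution (fun t _ => eps i j t) ?_ ?_ (fun t ht => eps_mem i j ht)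
    (fun t _ => eps_eps i j t)
  · intro t ht
    show Ideal.Quotient.mk Idl (Nt I t * ∏ s ∈ (TT n k).erase t, Et s)
      + Ideal.Quotient.mk Idl
          (Nt I (eps i j t) * ∏ s ∈ (TT n k).erase (eps i j t), Et s) = 0
    by_cases hfix : eps i j t = t
    · rw [hfix, ← map_add]
      refine hzero _ ?_
      have := fixed_term_dvd hij I ht hfix
      exact dvd_add this this
    · have ht1 : t ∈ T1 n k i j := by
        rw [T1, Finset.mem_filter]; exact ⟨ht, hfix⟩
      have hepst1 : eps i j t ∈ T1 n k i j := by
        rw [T1, Finset.mem_filter]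
        refine ⟨eps_mem i j ht, ?_⟩
        intro h
        exact hfix (by rw [← eps_eps i j t, h, h])
      have hepsne : eps i j t ≠ t := hfix
      rw [← map_add]
      refine hzero _ ?_
      -- rearrange into pair * rest
      have hmem1 : eps i j t ∈ (TT n k).erase t := Finset.mem_erase.mpr ⟨hepsne, eps_mem i j ht⟩
      have hmem2 : t ∈ (TT n k).erase (eps i j t) :=
        Finset.mem_erase.mpr ⟨fun h => hfix h.symm, ht⟩
      have e1 : ∏ s ∈ (TT n k).erase t, Et s
          = Et (eps i j t) * ∏ s ∈ ((TT n k).erase t).erase (eps i j t), Et s :=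
        (Finset.mul_prod_erase _ _ hmem1).symm
      have e2 : ∏ s ∈ (TT n k).erase (eps i j t), Et s
          = Et t * ∏ s ∈ ((TT n k).erase t).erase (eps i j t), Et s := by
        have h := (Finset.mul_prod_erase ((TT n k).erase (eps i j t)) Et hmem2).symm
        rwa [Finset.erase_right_comm] at h
      rw [e1, e2]
      have hring : Nt I t * (Et (eps i j t) * ∏ s ∈ ((TT n k).erase t).erase (eps i j t), Et s)
          + Nt I (eps i j t) * (Et t * ∏ s ∈ ((TT n k).erase t).erase (eps i j t), Et s)
          = (Nt I t * Et (eps i j t) + Nt I (eps i j t) * Et t)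
              * ∏ s ∈ ((TT n k).erase t).erase (eps i j t), Et s := by ring
      rw [hring]
      -- now count powers
      have hsub : ((T1 n k i j).erase t).erase (eps i j t) ⊆ ((TT n k).erase t).erase (eps i j t) := by
        intro s hs
        have h1 := Finset.mem_of_mem_erase hs
        have hset : s ∈ T1 n k i j := Finset.mem_of_mem_erase h1
        rw [Finset.mem_erase] at hs h1 ⊢
        refine ⟨hs.1, Finset.mem_erase.mpr ⟨h1.1, ?_⟩⟩
        rw [T1, Finset.mem_filter] at hset
        exact hset.1
      have hcard2 : 2 ≤ c := by
        rw [hc]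
        refine Finset.one_lt_card.mpr ⟨t, ht1, eps i j t, hepst1, fun h => hepsne h.symm⟩
      have hcardR : (((T1 n k i j).erase t).erase (eps i j t)).card = c - 2 := by
        rw [Finset.card_erase_of_mem (Finset.mem_erase.mpr ⟨hepsne, hepst1⟩),
          Finset.card_erase_of_mem ht1, ← hc]
        omega
      have hdvd2 : (lin i j) ^ (c - 2) ∣ ∏ s ∈ ((TT n k).erase t).erase (eps i j t), Et s := by
        rw [← hcardR]
        refine pow_card_dvd_prod hij _ _ ?_ hsub
        intro s hs
        exact Finset.mem_of_mem_erase (Finset.mem_of_mem_erase hs)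
      have hpair := pair_dvd hij I ht1
      have : (lin i j) ^ c = (lin i j) ^ 2 * (lin i j) ^ (c - 2) := by
        rw [← pow_add]
        congr 1
        omega
      rw [this]
      exact mul_dvd_mul hpair hdvd2
  · intro t ht hne
    by_contra hfix
    refine hne (hzero _ ?_)
    exact fixed_term_dvd hij I ht hfix

end Cancel

section Nice
variable {n k : ℕ}

noncomputable def halfF (n : ℕ) : Finset (Fin n × Fin n) :=
  Finset.univ.filter (fun p => p.1 < p.2)

noncomputable def offdF (n : ℕ) : Finset (Fin n × Fin n) :=
  Finset.univ.filter (fun p => p.1 ≠ p.2)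

def Nice (x : APoly n) : Prop :=
  ∃ (s : ℚ) (d f : Fin n × Fin n → ℕ), s ≠ 0 ∧
    x = C s * (∏ p ∈ halfF n, lin p.1 p.2 ^ d p) * (∏ p ∈ offdF n, rho p.1 p.2 ^ f p)

lemma Nice_C {s : ℚ} (hs : s ≠ 0) : Nice (C s : APoly n) := by
  refine ⟨s, 0, 0, hs, ?_⟩
  simp

lemma Nice_one : Nice (1 : APoly n) := by
  simpa using Nice_C (one_ne_zero : (1:ℚ) ≠ 0)

lemma prod_pow_add {β : Type*} (S : Finset β) (g : β → APoly n) (a b : β → ℕ) :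
    (∏ p ∈ S, g p ^ (a p + b p)) = (∏ p ∈ S, g p ^ a p) * (∏ p ∈ S, g p ^ b p) := by
  rw [← Finset.prod_mul_distrib]
  exact Finset.prod_congr rfl fun p _ => pow_add _ _ _

lemma Nice_mul {x y : APoly n} (hx : Nice x) (hy : Nice y) : Nice (x * y) := by
  obtain ⟨s, d, f, hs, rfl⟩ := hx
  obtain ⟨s', d', f', hs', rfl⟩ := hy
  refine ⟨s * s', fun p => d p + d' p, fun p => f p + f' p, mul_ne_zero hs hs', ?_⟩
  rw [map_mul, prod_pow_add (halfF n) (fun p => lin p.1 p.2) d d',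
    prod_pow_add (offdF n) (fun p => rho p.1 p.2) f f']
  ring

lemma prod_pow_single {β : Type*} [DecidableEq β] (S : Finset β) (g : β → APoly n)
    (b₀ : β) (hb : b₀ ∈ S) :
    (∏ p ∈ S, g p ^ (if p = b₀ then 1 else 0)) = g b₀ := by
  rw [Finset.prod_eq_single_of_mem b₀ hb (fun b _ hb' => by rw [if_neg hb', pow_zero])]
  rw [if_pos rfl, pow_one]

lemma Nice_lin {x y : Fin n} (hxy : x ≠ y) : Nice (av x - av y : APoly n) := by
  rcases lt_or_gt_of_ne hxy with h | h
  · refine ⟨1, fun p => if p = (x, y) then 1 else 0, 0, one_ne_zero, ?_⟩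
    rw [prod_pow_single (halfF n) (fun p => lin p.1 p.2) (x, y) (by simp [halfF, h])]
    simp [lin]
  · refine ⟨-1, fun p => if p = (y, x) then 1 else 0, 0, by norm_num, ?_⟩
    rw [prod_pow_single (halfF n) (fun p => lin p.1 p.2) (y, x) (by simp [halfF, h])]
    have hC : (C (-1 : ℚ) : APoly n) = -1 := by rw [map_neg, map_one]
    simp only [Pi.zero_apply, pow_zero, Finset.prod_const_one, mul_one, hC, lin]
    ring

lemma Nice_rho {x y : Fin n} (hxy : x ≠ y) : Nice (av x - av y + hbar : APoly n) := by
  refine ⟨1, 0, fun p => if p = (x, y) then 1 else 0, one_ne_zero, ?_⟩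
  rw [prod_pow_single (offdF n) (fun p => rho p.1 p.2) (x, y) (by simp [offdF, hxy])]
  simp [rho]

lemma Nice_prod {β : Type*} (S : Finset β) (g : β → APoly n) (h : ∀ b ∈ S, Nice (g b)) :
    Nice (∏ b ∈ S, g b) :=
  Finset.prod_induction g Nice (fun _ _ => Nice_mul) Nice_one h

lemma Nice_wDen {J : Fin k → Fin n} (hJ : Function.Injective J) (σ : Equiv.Perm (Fin k)) :
    Nice (wDen J σ) := by
  rw [wDen]
  refine Nice_prod _ _ fun m _ => Nice_prod _ _ fun l hl => ?_
  have hne : J (σ l) ≠ J (σ m) := fun h =>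
    absurd (σ.injective (hJ h)) (ne_of_lt (Finset.mem_Iio.mp hl))
  exact Nice_mul (Nice_lin hne) (Nice_rho hne)

lemma Nice_euler (J : Fin k → Fin n) : Nice (euler J) := by
  rw [euler]
  refine Nice_prod _ _ fun v hv => Nice_prod _ _ fun p _ => ?_
  simp only [Finset.mem_filter, Finset.mem_univ, true_and] at hv
  exact Nice_mul (Nice_lin (fun h => hv p h.symm)) (Nice_rho (hv p))

lemma Nice_DenD : Nice (DenD n k) := by
  rw [DenD]
  exact Nice_prod _ _ fun t ht => Nice_mul (Nice_wDen (mem_TT_inj ht) t.2) (Nice_euler t.1)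

end Nice

section Endgame
variable {n k : ℕ}

lemma pow_le_of_dvd {π U : APoly n} (hπ : Prime π) {a c : ℕ} (h : π ^ a ∣ π ^ c * U)
    (hU : ¬ π ∣ U) : a ≤ c := by
  by_contra hlt
  push_neg at hlt
  have h1 : π ^ (c + 1) ∣ π ^ c * U := dvd_trans (pow_dvd_pow π (by omega)) h
  rw [pow_succ] at h1
  exact hU ((mul_dvd_mul_iff_left (pow_ne_zero c hπ.ne_zero)).mp h1)

lemma prod_pow_dvd {β : Type*} [DecidableEq β] (S : Finset β) (π : β → APoly n) (d : β → ℕ)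
    (N : APoly n) (hp : ∀ b ∈ S, Prime (π b))
    (hnd : ∀ a ∈ S, ∀ b ∈ S, a ≠ b → ¬ π a ∣ π b)
    (hd : ∀ b ∈ S, π b ^ d b ∣ N) : (∏ b ∈ S, π b ^ d b) ∣ N := by
  classical
  induction S using Finset.induction_on with
  | empty => simpa using dvd_refl N
  | @insert a s ha ih =>
    rw [Finset.prod_insert ha]
    have hrest : (∏ b ∈ s, π b ^ d b) ∣ N :=
      ih (fun b hb => hp b (Finset.mem_insert_of_mem hb))
        (fun x hx y hy hxy => hnd x (Finset.mem_insert_of_mem hx) y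
          (Finset.mem_insert_of_mem hy) hxy)
        (fun b hb => hd b (Finset.mem_insert_of_mem hb))
    obtain ⟨W, hW⟩ := hrest
    have hπa : Prime (π a) := hp a (Finset.mem_insert_self a s)
    have hnd' : ¬ π a ∣ ∏ b ∈ s, π b ^ d b := by
      intro hdvd
      obtain ⟨b, hb, hdvd'⟩ := (hπa.dvd_finset_prod_iff _).mp hdvd
      exact hnd a (Finset.mem_insert_self a s) b (Finset.mem_insert_of_mem hb)
        (fun h => ha (h ▸ hb)) (hπa.dvd_of_dvd_pow hdvd')
    have hWdvd : π a ^ d a ∣ W := by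
      refine hπa.pow_dvd_of_dvd_mul_left (d a) hnd' ?_
      rw [← hW]
      exact hd a (Finset.mem_insert_self a s)
    rw [hW, mul_comm (π a ^ d a) _]
    exact mul_dvd_mul_left _ hWdvd

lemma lin_not_dvd_lin_half {p q : Fin n × Fin n} (hp : p ∈ halfF n) (hq : q ∈ halfF n)
    (hpq : p ≠ q) : ¬ lin p.1 p.2 ∣ lin q.1 q.2 := by
  rw [halfF, Finset.mem_filter] at hp hq
  have hij : p.1 ≠ p.2 := ne_of_lt hp.2
  intro h
  rcases lin_dvd_lin hij h with he | ⟨h1, h2⟩ | ⟨h1, h2⟩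
  · exact absurd he (ne_of_lt hq.2)
  · exact hpq (Prod.ext h1 h2).symm
  · have := hp.2
    rw [← h2, ← h1] at this
    exact absurd hq.2 (not_lt.mpr (le_of_lt this))

/-- `d p ≤ c p`: exponent of `lin p` in the denominator is at most the number of
non-fixed terms. -/
lemma d_le_c (I : Fin k → Fin n) {p : Fin n × Fin n} (hp : p ∈ halfF n)
    {s : ℚ} {d f : Fin n × Fin n → ℕ} (hs : s ≠ 0)
    (hdec : C (k.factorial : ℚ) * DenD n k
      = C s * (∏ q ∈ halfF n, lin q.1 q.2 ^ d q) * (∏ q ∈ offdF n, rho q.1 q.2 ^ f q)) :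
    d p ≤ (T1 n k p.1 p.2).card := by
  classical
  rw [halfF, Finset.mem_filter] at hp
  have hij : p.1 ≠ p.2 := ne_of_lt hp.2
  set i := p.1
  set j := p.2
  -- split the denominator
  have hsplit : DenD n k = (∏ t ∈ T1 n k i j, Et t) *
      ∏ t ∈ (TT n k).filter (fun t => ¬ eps i j t ≠ t), Et t := by
    rw [DenD, T1]
    exact (Finset.prod_filter_mul_prod_filter_not _ _ _).symm
  have hex : ∀ t, ∃ u : APoly n, t ∈ T1 n k i j → (Et t = lin i j * u ∧ ¬ lin i j ∣ u) := by
    intro t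
    by_cases ht : t ∈ T1 n k i j
    · obtain ⟨h1, h2⟩ := Et_once_of_T1 hij ht
      obtain ⟨u, hu⟩ := h1
      exact ⟨u, fun _ => ⟨hu, fun hdvd => h2 (by rw [hu, sq]; exact mul_dvd_mul_left _ hdvd)⟩⟩
    · exact ⟨0, fun h => absurd h ht⟩
  choose u hu using hex
  have h1 : ∏ t ∈ T1 n k i j, Et t
      = lin i j ^ (T1 n k i j).card * ∏ t ∈ T1 n k i j, u t := by
    rw [Finset.prod_congr rfl (fun t ht => (hu t ht).1), Finset.prod_mul_distrib,
      Finset.prod_const]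
  set U : APoly n := (∏ t ∈ T1 n k i j, u t) *
      ((∏ t ∈ (TT n k).filter (fun t => ¬ eps i j t ≠ t), Et t) * C (k.factorial : ℚ)) with hU
  have hEq : C (k.factorial : ℚ) * DenD n k = lin i j ^ (T1 n k i j).card * U := by
    rw [hsplit, h1, hU]; ring
  have hUnd : ¬ lin i j ∣ U := by
    rw [hU]
    intro h
    rcases (prime_lin hij).dvd_mul.mp h with h | h
    · obtain ⟨t, ht, hdvd⟩ := ((prime_lin hij).dvd_finset_prod_iff _).mp h
      exact (hu t ht).2 hdvd
    · rcases (prime_lin hij).dvd_mul.mp h with h | h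
      · obtain ⟨t, ht, hdvd⟩ := ((prime_lin hij).dvd_finset_prod_iff _).mp h
        rw [Finset.mem_filter, not_not] at ht
        exact Et_not_dvd_of_fixed hij ht.1 ht.2 hdvd
      · exact lin_not_dvd_C (Nat.cast_ne_zero.mpr (Nat.factorial_ne_zero k)) h
  have hdvd : lin i j ^ d p ∣ C (k.factorial : ℚ) * DenD n k := by
    rw [hdec]
    refine Dvd.dvd.mul_right (Dvd.dvd.mul_left ?_ _) _
    exact Finset.dvd_prod_of_mem (fun q => lin q.1 q.2 ^ d q)
      (by rw [halfF, Finset.mem_filter]; exact ⟨Finset.mem_univ _, hp.2⟩)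
  rw [hEq] at hdvd
  exact pow_le_of_dvd (prime_lin hij) hdvd hUnd

end Endgame
end NoPoles

open NoPoles

/-- All apparent poles of the localization sum `S_I` along the hyperplanes `a_i = a_j`
cancel: `S_I` can be written with a denominator that is a product of factors
`(a_i − a_j + ħ)` over ordered pairs `i ≠ j` only. -/
theorem localization_sum_no_a_poles (n k : ℕ) (hn : 1 ≤ n) (hk : 1 ≤ k) (hkn : k ≤ n)
    (I : Fin k → Fin n) (hI : StrictMono I) :
    ∃ (P : APoly n) (m : Fin n × Fin n → ℕ),
      Sloc n k I = algebraMap (APoly n) (AField n) P /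
        algebraMap (APoly n) (AField n)
          (∏ p ∈ Finset.univ.filter (fun p : Fin n × Fin n => p.1 ≠ p.2),
            (av p.1 - av p.2 + hbar) ^ m p) := by
  classical
  have halg : Function.Injective (algebraMap (APoly n) (AField n)) :=
    IsFractionRing.injective _ _
  have hkfac : ((k.factorial : ℚ)) ≠ 0 := Nat.cast_ne_zero.mpr (Nat.factorial_ne_zero k)
  have algne : ∀ x : APoly n, x ≠ 0 → algebraMap (APoly n) (AField n) x ≠ 0 :=
    fun x hx => (map_ne_zero_iff _ halg).mpr hx
  have hCk : (C (k.factorial : ℚ) : APoly n) ≠ 0 := fun h =>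
    hkfac (by rwa [MvPolynomial.C_eq_zero] at h)
  have hDen0 : DenD n k ≠ 0 := by
    rw [DenD]
    exact Finset.prod_ne_zero_iff.mpr fun t ht => Et_ne_zero ht
  -- step 1 : Sloc = NumD / (C k! * DenD)
  have hmain : algebraMap (APoly n) (AField n) (C (k.factorial : ℚ)) * Sloc n k I
      = algebraMap (APoly n) (AField n) (NumD n k I) /
        algebraMap (APoly n) (AField n) (DenD n k) := by
    rw [main1 I, main2 I]
    exact main3 I
  have hCkF : algebraMap (APoly n) (AField n) (C (k.factorial : ℚ)) ≠ 0 := algne _ hCk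
  have hDenF : algebraMap (APoly n) (AField n) (DenD n k) ≠ 0 := algne _ hDen0
  have hS : Sloc n k I = algebraMap (APoly n) (AField n) (NumD n k I) /
      algebraMap (APoly n) (AField n) (C (k.factorial : ℚ) * DenD n k) := by
    rw [map_mul, eq_div_iff (mul_ne_zero hCkF hDenF)]
    calc Sloc n k I * (algebraMap (APoly n) (AField n) (C (k.factorial : ℚ)) *
          algebraMap (APoly n) (AField n) (DenD n k))
        = (algebraMap (APoly n) (AField n) (C (k.factorial : ℚ)) * Sloc n k I) *
          algebraMap (APoly n) (AField n) (DenD n k) := by ring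
      _ = (algebraMap (APoly n) (AField n) (NumD n k I) /
            algebraMap (APoly n) (AField n) (DenD n k)) *
          algebraMap (APoly n) (AField n) (DenD n k) := by rw [hmain]
      _ = algebraMap (APoly n) (AField n) (NumD n k I) := div_mul_cancel₀ _ hDenF
  -- step 2 : decompose the denominator
  have hNice : Nice (C (k.factorial : ℚ) * DenD n k) :=
    Nice_mul (Nice_C hkfac) Nice_DenD
  obtain ⟨s, d, f, hs, hdec⟩ := hNice
  -- step 3 : each lin-power divides NumD
  have hdvdNum : ∀ p ∈ halfF n, lin p.1 p.2 ^ d p ∣ NumD n k I := by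
    intro p hp
    have hij : p.1 ≠ p.2 := by
      rw [halfF, Finset.mem_filter] at hp
      exact ne_of_lt hp.2
    have hdc := d_le_c I hp hs hdec
    exact dvd_trans (pow_dvd_pow _ hdc) (cancel hij I)
  have hprodDvd : (∏ p ∈ halfF n, lin p.1 p.2 ^ d p) ∣ NumD n k I := by
    refine prod_pow_dvd (halfF n) _ d _ ?_ ?_ hdvdNum
    · intro p hp
      rw [halfF, Finset.mem_filter] at hp
      exact prime_lin (ne_of_lt hp.2)
    · intro p hp q hq hpq
      exact lin_not_dvd_lin_half hp hq hpq
  obtain ⟨W, hW⟩ := hprodDvd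
  refine ⟨C s⁻¹ * W, f, ?_⟩
  -- step 4 : final computation
  set Pi1 := ∏ p ∈ halfF n, lin p.1 p.2 ^ d p with hPi1
  set Pi2 := ∏ p ∈ offdF n, rho p.1 p.2 ^ f p with hPi2
  have hPi1ne : Pi1 ≠ 0 := by
    rw [hPi1]
    refine Finset.prod_ne_zero_iff.mpr fun p hp => ?_
    rw [halfF, Finset.mem_filter] at hp
    exact pow_ne_zero _ (lin_ne_zero (ne_of_lt hp.2))
  have hPi2ne : Pi2 ≠ 0 := by
    rw [hPi2]
    exact Finset.prod_ne_zero_iff.mpr fun p hp => pow_ne_zero _ (rho_ne_zero _ _)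
  have hPi1F : algebraMap (APoly n) (AField n) Pi1 ≠ 0 := algne _ hPi1ne
  have hPi2F : algebraMap (APoly n) (AField n) Pi2 ≠ 0 := algne _ hPi2ne
  have hCs : (C s : APoly n) ≠ 0 := fun h => hs (by
    rwa [MvPolynomial.C_eq_zero] at h)
  have hCsPi2F : algebraMap (APoly n) (AField n) (C s * Pi2) ≠ 0 :=
    algne _ (mul_ne_zero hCs hPi2ne)
  show Sloc n k I = algebraMap (APoly n) (AField n) (C s⁻¹ * W) /
      algebraMap (APoly n) (AField n) Pi2
  rw [hS, hW, hdec]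
  rw [show (C s : APoly n) * Pi1 * Pi2 = Pi1 * (C s * Pi2) from by ring]
  rw [map_mul, map_mul, mul_div_mul_left _ _ hPi1F]
  rw [div_eq_div_iff hCsPi2F hPi2F, ← map_mul, ← map_mul]
  congr 1
  have hCsinv : (C s⁻¹ : APoly n) * C s = 1 := by
    rw [← map_mul, inv_mul_cancel₀ hs, map_one]
  calc W * Pi2 = ((C s⁻¹ : APoly n) * C s) * (W * Pi2) := by rw [hCsinv, one_mul]
    _ = C s⁻¹ * W * (C s * Pi2) := by ring
end

section
/- Fix integers n ≥ 1, 1 ≤ k ≤ n, and strictly increasing k-tuples I = (i_1 < … < i_k) and J = (j_1 < … < j_k) in {1,…,n}. If it is not the case that j_r ≥ i_r for all 1 ≤ r ≤ k, then the restricted weight function W(p_I)|_{p_J} is the zero element of ℚ(a_1,…,a_n,ħ). -/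
open Finset MvPolynomial

/-- If it is not the case that `j_r ≥ i_r` for all `r`, then the restricted weight
function `W(p_I)|_{p_J}` vanishes. -/
theorem Wres_eq_zero_of_not_dominant (n k : ℕ) (hn : 1 ≤ n) (hk : 1 ≤ k) (hkn : k ≤ n)
    (I J : Fin k → Fin n) (hI : StrictMono I) (hJ : StrictMono J)
    (h : ¬ ∀ r, I r ≤ J r) :
    Wres I J = 0 := by
  push_neg at h
  obtain ⟨r, hr⟩ := h
  -- `J r < I r`
  have hJr : J r < I r := hr
  unfold Wres
  apply Finset.sum_eq_zero
  intro σ _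
  -- find `s ≥ r` with `σ s ≤ r`
  obtain ⟨s, hsr, hσs⟩ : ∃ s : Fin k, r ≤ s ∧ σ s ≤ r := by
    by_contra hcon
    push_neg at hcon
    have hsub : (Finset.Iic r).image σ.symm ⊆ Finset.Iio r := by
      intro x hx
      simp only [Finset.mem_image, Finset.mem_Iic] at hx
      obtain ⟨y, hy, rfl⟩ := hx
      have := hcon (σ.symm y)
      rw [Finset.mem_Iio]
      by_contra hge
      exact absurd (by simpa using hy) (not_le.mpr (this (not_lt.mp hge)))
    have hcard := Finset.card_le_card hsub
    rw [Finset.card_image_of_injective _ σ.symm.injective, Fin.card_Iic, Fin.card_Iio] at hcard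
    omega
  -- hence `J (σ s) < I s`
  have hlt : J (σ s) < I s :=
    lt_of_le_of_lt (hJ.monotone hσs) (lt_of_lt_of_le hJr (hI.monotone hsr))
  -- so the numerator vanishes
  have hnum : wNum I J σ = 0 := by
    unfold wNum
    apply Finset.prod_eq_zero (Finset.mem_univ s)
    have : (∏ α ∈ Finset.Iio (I s), (av α - av (J (σ s))) : APoly n) = 0 := by
      apply Finset.prod_eq_zero (Finset.mem_Iio.mpr hlt)
      exact sub_self _
    rw [this, zero_mul]
  rw [hnum, map_zero, zero_div]
end

section
/- Fix integers n ≥ 1, 1 ≤ k ≤ n, and a strictly increasing k-tuple I = (i_1 < … < i_k) in {1,…,n}. Define the polynomials D := ∏_{1≤ℓ<m≤k} (t_ℓ − t_m)(t_ℓ − t_m + ħ)(t_m − t_ℓ + ħ) and N := Σ_{σ ∈ S_k} sgn(σ) · [ ∏_{r=1}^{k} ( ∏_{α=1}^{i_r−1} (a_α − t_{σ(r)}) · ∏_{β=i_r+1}^{n} (t_{σ(r)} − a_β + ħ) ) ] · ∏_{1≤ℓ<m≤k} (t_{σ(m)} − t_{σ(ℓ)} + ħ) in ℚ[t_1,…,t_k,a_1,…,a_n,ħ].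 Then: (i) W(p_I) = N/D in the fraction field ℚ(t_1,…,t_k,a_1,…,a_n,ħ); and (ii) the Vandermonde polynomial ∏_{1≤ℓ<m≤k} (t_ℓ − t_m) divides N in ℚ[t_1,…,t_k,a_1,…,a_n,ħ]. -/
open Finset MvPolynomial

section Helpers

variable {R : Type*} [CommRing R]

lemma pairProd {k : ℕ} (h : Fin k → Fin k → R) :
    ∏ m : Fin k, ∏ l ∈ Finset.Iio m, h l m
      = ∏ p ∈ Finset.univ.filter (fun p : Fin k × Fin k => p.1 < p.2), h p.1 p.2 := by
  rw [Finset.prod_sigma']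
  refine Finset.prod_nbij' (fun x => (x.2, x.1)) (fun p => ⟨p.2, p.1⟩) ?_ ?_ ?_ ?_ ?_ <;>
    simp [Finset.mem_sigma]

lemma pairProd' {k : ℕ} (h : Fin k → Fin k → R) :
    ∏ i : Fin k, ∏ j ∈ Finset.Ioi i, h i j
      = ∏ p ∈ Finset.univ.filter (fun p : Fin k × Fin k => p.1 < p.2), h p.1 p.2 := by
  rw [Finset.prod_sigma']
  refine Finset.prod_nbij' (fun x => (x.1, x.2)) (fun p => ⟨p.1, p.2⟩) ?_ ?_ ?_ ?_ ?_ <;>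
    simp [Finset.mem_sigma]

lemma symmProd {k : ℕ} (g : Fin k → Fin k → R) (hg : ∀ a b, g a b = g b a)
    (σ : Equiv.Perm (Fin k)) :
    ∏ p ∈ Finset.univ.filter (fun p : Fin k × Fin k => p.1 < p.2), g (σ p.1) (σ p.2)
      = ∏ p ∈ Finset.univ.filter (fun p : Fin k × Fin k => p.1 < p.2), g p.1 p.2 := by
  refine Finset.prod_nbij'
    (fun p => if σ p.1 < σ p.2 then (σ p.1, σ p.2) else (σ p.2, σ p.1))
    (fun q => if σ⁻¹ q.1 < σ⁻¹ q.2 then (σ⁻¹ q.1, σ⁻¹ q.2) else (σ⁻¹ q.2, σ⁻¹ q.1))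
    ?_ ?_ ?_ ?_ ?_
  · intro p hp
    simp only [Finset.mem_filter, Finset.mem_univ, true_and] at hp ⊢
    split_ifs with h
    · exact h
    · exact lt_of_le_of_ne (not_lt.mp h) (fun he => absurd (σ.injective he) (ne_of_lt hp).symm)
  · intro q hq
    simp only [Finset.mem_filter, Finset.mem_univ, true_and] at hq ⊢
    split_ifs with h
    · exact h
    · exact lt_of_le_of_ne (not_lt.mp h)
        (fun he => absurd (σ.symm.injective he) (ne_of_lt hq).symm)
  · intro p hp
    simp only [Finset.mem_filter, Finset.mem_univ, true_and] at hp
    split_ifs with h1 h2 h3 <;> simp_all <;> omega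
  · intro q hq
    simp only [Finset.mem_filter, Finset.mem_univ, true_and] at hq
    split_ifs with h1 h2 h3 <;> simp_all <;> omega
  · intro p hp
    split_ifs with h
    · rfl
    · exact hg _ _

lemma negProd {k : ℕ} (f : Fin k × Fin k → R) (s : Finset (Fin k × Fin k)) :
    ∏ p ∈ s, -f p = (-1 : R) ^ s.card * ∏ p ∈ s, f p := by
  rw [← Finset.prod_const, ← Finset.prod_mul_distrib]
  simp

lemma vandermondeSign {k : ℕ} (v : Fin k → R) (σ : Equiv.Perm (Fin k)) :
    ∏ m : Fin k, ∏ l ∈ Finset.Iio m, (v (σ l) - v (σ m))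
      = ((Equiv.Perm.sign σ : ℤ) : R) * ∏ m : Fin k, ∏ l ∈ Finset.Iio m, (v l - v m) := by
  have key : ∀ w : Fin k → R, ∏ m : Fin k, ∏ l ∈ Finset.Iio m, (w l - w m)
      = (-1 : R) ^ (Finset.univ.filter (fun p : Fin k × Fin k => p.1 < p.2)).card *
        (Matrix.vandermonde w).det := by
    intro w
    rw [Matrix.det_vandermonde, pairProd' (fun i j => w j - w i),
      pairProd (fun l m => w l - w m)]
    rw [show (∏ p ∈ Finset.univ.filter (fun p : Fin k × Fin k => p.1 < p.2), (w p.1 - w p.2))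
        = ∏ p ∈ Finset.univ.filter (fun p : Fin k × Fin k => p.1 < p.2), -(w p.2 - w p.1) by
      simp]
    rw [negProd]
  have hperm : Matrix.vandermonde (fun i => v (σ i)) = (Matrix.vandermonde v).submatrix σ id := by
    ext i j; simp [Matrix.vandermonde]
  rw [key (fun l => v (σ l)), key v, hperm, Matrix.det_permute]
  ring

end Helpers

lemma sub_dvd_sub_aeval {τ : Type*} [DecidableEq τ] (i j : τ) (p : MvPolynomial τ ℚ) :
    (X i - X j : MvPolynomial τ ℚ) ∣
      p - aeval (fun s => if s = i then X j else X s) p := by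
  induction p using MvPolynomial.induction_on with
  | C a => simp [aeval_C, algebraMap_eq]
  | add p q hp hq =>
      rw [map_add]
      have : p + q - (aeval (fun s => if s = i then X j else X s) p +
          aeval (fun s => if s = i then X j else X s) q)
          = (p - aeval (fun s => if s = i then X j else X s) p) +
            (q - aeval (fun s => if s = i then X j else X s) q) := by ring
      rw [this]; exact dvd_add hp hq
  | mul_X p s hp =>
      rw [map_mul, aeval_X]
      have h1 : p * X s - aeval (fun s => if s = i then X j else X s) p *
            (if s = i then X j else X s)
          = (p - aeval (fun s => if s = i then X j else X s) p) * X s +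
            aeval (fun s => if s = i then X j else X s) p *
              (X s - if s = i then X j else X s) := by ring
      rw [h1]
      refine dvd_add (hp.mul_right _) (Dvd.dvd.mul_left ?_ _)
      rcases eq_or_ne s i with rfl | hs
      · simp
      · simp [hs]

lemma prime_X_sub_X {τ : Type*} [DecidableEq τ] {i j : τ} (hij : j ≠ i) :
    Prime (X i - X j : MvPolynomial τ ℚ) := by
  let e : MvPolynomial τ ℚ ≃ₐ[ℚ] Polynomial (MvPolynomial {s : τ // s ≠ i} ℚ) :=
    (renameEquiv ℚ (Equiv.optionSubtypeNe i).symm).trans (optionEquivLeft ℚ _)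
  have he : e (X i - X j) = Polynomial.X - Polynomial.C (X ⟨j, hij⟩) := by
    simp only [e, AlgEquiv.trans_apply, map_sub, renameEquiv_apply, rename_X,
      Equiv.optionSubtypeNe_symm_self, Equiv.optionSubtypeNe_symm_of_ne hij,
      optionEquivLeft_X_none, optionEquivLeft_X_some]
  rw [← MulEquiv.prime_iff e.toMulEquiv]
  rw [show e.toMulEquiv (X i - X j) = e (X i - X j) from rfl, he]
  exact Polynomial.prime_X_sub_C _

lemma prod_primes_dvd'' {R : Type*} [CommRing R] [IsDomain R] {ι : Type*} [DecidableEq ι]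
    (s : Finset ι) (f : ι → R) (hp : ∀ i ∈ s, Prime (f i))
    (hnd : ∀ i ∈ s, ∀ j ∈ s, i ≠ j → ¬ f i ∣ f j) :
    ∀ N : R, (∀ i ∈ s, f i ∣ N) → ∏ i ∈ s, f i ∣ N := by
  induction s using Finset.induction_on with
  | empty => intro N _; simp
  | @insert a s ha ih =>
      intro N hN
      obtain ⟨M, rfl⟩ := hN a (Finset.mem_insert_self a s)
      have hM : ∀ i ∈ s, f i ∣ M := by
        intro i hi
        have hia : i ≠ a := fun h => ha (h ▸ hi)
        rcases (hp i (Finset.mem_insert_of_mem hi)).2.2 (f a) M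
            (hN i (Finset.mem_insert_of_mem hi)) with h | h
        · exact absurd h (hnd i (Finset.mem_insert_of_mem hi) a (Finset.mem_insert_self a s) hia)
        · exact h
      rw [Finset.prod_insert ha]
      exact mul_dvd_mul_left (f a)
        (ih (fun i hi => hp i (Finset.mem_insert_of_mem hi))
          (fun i hi j hj hij => hnd i (Finset.mem_insert_of_mem hi) j
            (Finset.mem_insert_of_mem hj) hij) M (hM))

/-- The polynomial ring `ℚ[t_1,…,t_k,a_1,…,a_n,ħ]`. -/
abbrev TPoly (n k : ℕ) := MvPolynomial (Fin k ⊕ Fin n ⊕ Unit) ℚ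

/-- The variable `t_s`. -/
noncomputable def tT {n k : ℕ} (s : Fin k) : TPoly n k := X (Sum.inl s)

/-- The variable `a_v`. -/
noncomputable def aT {n k : ℕ} (v : Fin n) : TPoly n k := X (Sum.inr (Sum.inl v))

/-- The variable `ħ`. -/
noncomputable def hT {n k : ℕ} : TPoly n k := X (Sum.inr (Sum.inr ()))

/-- The field `ℚ(t_1,…,t_k,a_1,…,a_n,ħ)`. -/
abbrev TField (n k : ℕ) := FractionRing (TPoly n k)

/-- The weight function `W(p_I)`. -/
noncomputable def Wfull (n k : ℕ) (I : Fin k → Fin n) : TField n k :=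
  ∑ σ : Equiv.Perm (Fin k),
    algebraMap (TPoly n k) (TField n k)
      (∏ r : Fin k, ((∏ α ∈ Finset.Iio (I r), (aT α - tT (σ r))) *
        (∏ β ∈ Finset.Ioi (I r), (tT (σ r) - aT β + hT)))) /
    algebraMap (TPoly n k) (TField n k)
      (∏ m : Fin k, ∏ l ∈ Finset.Iio m,
        (tT (σ l) - tT (σ m)) * (tT (σ l) - tT (σ m) + hT))

/-- The numerator polynomial `N`. -/
noncomputable def Npoly (n k : ℕ) (I : Fin k → Fin n) : TPoly n k :=
  ∑ σ : Equiv.Perm (Fin k),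
    MvPolynomial.C ((Equiv.Perm.sign σ : ℤ) : ℚ) *
      ((∏ r : Fin k, ((∏ α ∈ Finset.Iio (I r), (aT α - tT (σ r))) *
          (∏ β ∈ Finset.Ioi (I r), (tT (σ r) - aT β + hT)))) *
        ∏ m : Fin k, ∏ l ∈ Finset.Iio m, (tT (σ m) - tT (σ l) + hT))

/-- The denominator polynomial `D`. -/
noncomputable def Dpoly (n k : ℕ) : TPoly n k :=
  ∏ m : Fin k, ∏ l ∈ Finset.Iio m,
    (tT l - tT m) * (tT l - tT m + hT) * (tT m - tT l + hT)

lemma aeval_Npoly_eq_zero (n k : ℕ) (I : Fin k → Fin n) (l m : Fin k) (hlm : l ≠ m) :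
    aeval (fun s => if s = (Sum.inl l : Fin k ⊕ Fin n ⊕ Unit) then
      (X (Sum.inl m) : TPoly n k) else X s) (Npoly n k I) = 0 := by
  set f : (Fin k ⊕ Fin n ⊕ Unit) → TPoly n k :=
    fun s => if s = (Sum.inl l : Fin k ⊕ Fin n ⊕ Unit) then X (Sum.inl m) else X s with hf
  set ψ : Fin k → TPoly n k :=
    fun a => if a = l then X (Sum.inl m) else X (Sum.inl a) with hψ
  have hψf : ∀ a : Fin k, aeval f (tT a : TPoly n k) = ψ a := by
    intro a; simp [tT, f, ψ, aeval_X, Sum.inl.injEq]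
  have hψswap : ∀ a : Fin k, ψ (Equiv.swap l m a) = ψ a := by
    intro a
    rcases eq_or_ne a l with rfl | h1
    · simp [Equiv.swap_apply_left, ψ, hlm.symm]
    · rcases eq_or_ne a m with rfl | h2
      · simp [Equiv.swap_apply_right, ψ, h1]
      · rw [Equiv.swap_apply_of_ne_of_ne h1 h2]
  have haT : ∀ α : Fin n, aeval f (aT α : TPoly n k) = aT α := by
    intro α; simp [aT, f, aeval_X]
  have hhT : aeval f (hT : TPoly n k) = hT := by simp [hT, f, aeval_X]
  set G : (Fin k → TPoly n k) → TPoly n k := fun u =>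
    (∏ r : Fin k, ((∏ α ∈ Finset.Iio (I r), (aT α - u r)) *
        (∏ β ∈ Finset.Ioi (I r), (u r - aT β + hT)))) *
      ∏ m' : Fin k, ∏ l' ∈ Finset.Iio m', (u m' - u l' + hT) with hG
  have hGσ : ∀ σ : Equiv.Perm (Fin k),
      aeval f ((∏ r : Fin k, ((∏ α ∈ Finset.Iio (I r), (aT α - tT (σ r))) *
          (∏ β ∈ Finset.Ioi (I r), (tT (σ r) - aT β + hT)))) *
        ∏ m' : Fin k, ∏ l' ∈ Finset.Iio m', (tT (σ m') - tT (σ l') + hT))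
        = G (fun r => ψ (σ r)) := by
    intro σ
    simp only [map_mul, map_prod, map_sub, map_add, hψf, haT, hhT, hG]
  have key : (∑ σ : Equiv.Perm (Fin k),
      MvPolynomial.C ((Equiv.Perm.sign σ : ℤ) : ℚ) * G (fun r => ψ (σ r))) = 0 := by
    set S := ∑ σ : Equiv.Perm (Fin k),
      MvPolynomial.C ((Equiv.Perm.sign σ : ℤ) : ℚ) * G (fun r => ψ (σ r)) with hS
    have hneg : S = -S := by
      have hre : S = ∑ σ : Equiv.Perm (Fin k),
          MvPolynomial.C ((Equiv.Perm.sign (Equiv.swap l m * σ) : ℤ) : ℚ) *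
            G (fun r => ψ ((Equiv.swap l m * σ) r)) := by
        rw [hS]
        exact Fintype.sum_equiv (Equiv.mulLeft (Equiv.swap l m))
          _ _ (fun σ => rfl) |>.symm
      refine hre.trans ?_
      rw [hS, ← Finset.sum_neg_distrib]
      refine Finset.sum_congr rfl (fun σ _ => ?_)
      have h1 : Equiv.Perm.sign (Equiv.swap l m * σ) = - Equiv.Perm.sign σ := by
        rw [Equiv.Perm.sign_mul, Equiv.Perm.sign_swap hlm]; simp
      have h2 : (fun r => ψ ((Equiv.swap l m * σ) r)) = fun r => ψ (σ r) := by
        funext r; rw [Equiv.Perm.mul_apply, hψswap]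
      rw [h1, h2]
      push_cast [map_neg]
      ring
    have h2S : S + S = 0 := by linear_combination hneg
    have : (2 : TPoly n k) * S = 0 := by linear_combination h2S
    rcases mul_eq_zero.mp this with h | h
    · exact absurd h two_ne_zero
    · exact h
  rw [Npoly, map_sum]
  rw [← key]
  refine Finset.sum_congr rfl (fun σ _ => ?_)
  rw [map_mul, hGσ σ, aeval_C, algebraMap_eq]

/-- `W(p_I) = N/D` in `ℚ(t,a,ħ)`, and the Vandermonde polynomial `∏_{ℓ<m}(t_ℓ−t_m)`
divides `N` in `ℚ[t,a,ħ]`. -/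
theorem weight_function_eq_N_div_D_and_vandermonde_dvd (n k : ℕ) (hn : 1 ≤ n) (hk : 1 ≤ k)
    (hkn : k ≤ n) (I : Fin k → Fin n) (hI : StrictMono I) :
    Wfull n k I = algebraMap (TPoly n k) (TField n k) (Npoly n k I) /
        algebraMap (TPoly n k) (TField n k) (Dpoly n k) ∧
      (∏ m : Fin k, ∏ l ∈ Finset.Iio m, (tT l - tT m)) ∣ Npoly n k I := by
  have ht_ne : ∀ a b : Fin k, a ≠ b → (tT a - tT b : TPoly n k) ≠ 0 := by
    intro a b hab h
    have := congrArg (eval (fun s => if s = (Sum.inl a : Fin k ⊕ Fin n ⊕ Unit)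
      then (1 : ℚ) else 0)) h
    simp [tT, hab.symm] at this
  have hth_ne : ∀ a b : Fin k, a ≠ b → (tT a - tT b + hT : TPoly n k) ≠ 0 := by
    intro a b hab h
    have := congrArg (eval (fun s => if s = (Sum.inl a : Fin k ⊕ Fin n ⊕ Unit)
      then (1 : ℚ) else 0)) h
    simp [tT, hT, hab.symm] at this
  constructor
  · -- part (i)
    have hD_ne : Dpoly n k ≠ 0 := by
      rw [Dpoly]
      rw [Finset.prod_ne_zero_iff]
      intro m _
      rw [Finset.prod_ne_zero_iff]
      intro l hl
      have hlm : l ≠ m := ne_of_lt (Finset.mem_Iio.mp hl)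
      exact mul_ne_zero (mul_ne_zero (ht_ne l m hlm) (hth_ne l m hlm)) (hth_ne m l hlm.symm)
    have hB_ne : ∀ σ : Equiv.Perm (Fin k),
        (∏ m : Fin k, ∏ l ∈ Finset.Iio m,
          (tT (σ l) - tT (σ m)) * (tT (σ l) - tT (σ m) + hT) : TPoly n k) ≠ 0 := by
      intro σ
      rw [Finset.prod_ne_zero_iff]
      intro m _
      rw [Finset.prod_ne_zero_iff]
      intro l hl
      have hlm : σ l ≠ σ m := fun h =>
        (ne_of_lt (Finset.mem_Iio.mp hl)) (σ.injective h)
      exact mul_ne_zero (ht_ne _ _ hlm) (hth_ne _ _ hlm)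
    have hBC : ∀ σ : Equiv.Perm (Fin k),
        (∏ m : Fin k, ∏ l ∈ Finset.Iio m,
          (tT (σ l) - tT (σ m)) * (tT (σ l) - tT (σ m) + hT) : TPoly n k) *
        (∏ m : Fin k, ∏ l ∈ Finset.Iio m, (tT (σ m) - tT (σ l) + hT))
          = ((Equiv.Perm.sign σ : ℤ) : TPoly n k) * Dpoly n k := by
      intro σ
      have hv : (∏ p ∈ Finset.univ.filter (fun p : Fin k × Fin k => p.1 < p.2),
          (tT (σ p.1) - tT (σ p.2) : TPoly n k))
          = ((Equiv.Perm.sign σ : ℤ) : TPoly n k) *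
            ∏ p ∈ Finset.univ.filter (fun p : Fin k × Fin k => p.1 < p.2), (tT p.1 - tT p.2) := by
        rw [← pairProd (fun l m => (tT (σ l) - tT (σ m) : TPoly n k)),
          ← pairProd (fun l m => (tT l - tT m : TPoly n k))]
        exact vandermondeSign (fun a => (tT a : TPoly n k)) σ
      have hs : (∏ p ∈ Finset.univ.filter (fun p : Fin k × Fin k => p.1 < p.2),
          ((tT (σ p.1) - tT (σ p.2) + hT) * (tT (σ p.2) - tT (σ p.1) + hT) : TPoly n k))
          = ∏ p ∈ Finset.univ.filter (fun p : Fin k × Fin k => p.1 < p.2),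
            ((tT p.1 - tT p.2 + hT) * (tT p.2 - tT p.1 + hT)) :=
        symmProd (fun a b => ((tT a - tT b + hT) * (tT b - tT a + hT) : TPoly n k))
          (fun a b => by ring) σ
      rw [pairProd (fun l m => ((tT (σ l) - tT (σ m)) * (tT (σ l) - tT (σ m) + hT) : TPoly n k)),
        pairProd (fun l m => (tT (σ m) - tT (σ l) + hT : TPoly n k)),
        ← Finset.prod_mul_distrib]
      rw [show (∏ p ∈ Finset.univ.filter (fun p : Fin k × Fin k => p.1 < p.2),
          ((tT (σ p.1) - tT (σ p.2)) * (tT (σ p.1) - tT (σ p.2) + hT) *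
            (tT (σ p.2) - tT (σ p.1) + hT) : TPoly n k))
          = ∏ p ∈ Finset.univ.filter (fun p : Fin k × Fin k => p.1 < p.2),
            ((tT (σ p.1) - tT (σ p.2)) *
              ((tT (σ p.1) - tT (σ p.2) + hT) * (tT (σ p.2) - tT (σ p.1) + hT))) from
        Finset.prod_congr rfl (fun p _ => by ring)]
      rw [Finset.prod_mul_distrib, hv, hs, Dpoly,
        pairProd (fun l m => ((tT l - tT m) * (tT l - tT m + hT) * (tT m - tT l + hT) : TPoly n k))]
      conv_rhs => rw [show (∏ p ∈ Finset.univ.filter (fun p : Fin k × Fin k => p.1 < p.2),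
          ((tT p.1 - tT p.2) * (tT p.1 - tT p.2 + hT) * (tT p.2 - tT p.1 + hT) : TPoly n k))
          = ∏ p ∈ Finset.univ.filter (fun p : Fin k × Fin k => p.1 < p.2),
            ((tT p.1 - tT p.2) * ((tT p.1 - tT p.2 + hT) * (tT p.2 - tT p.1 + hT))) from
        Finset.prod_congr rfl (fun p _ => by ring), Finset.prod_mul_distrib]
      ring
    have hinj : Function.Injective (algebraMap (TPoly n k) (TField n k)) :=
      IsFractionRing.injective _ _
    rw [Wfull, Npoly, map_sum, Finset.sum_div]
    refine Finset.sum_congr rfl (fun σ _ => ?_)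
    rw [div_eq_div_iff ((map_ne_zero_iff _ hinj).mpr (hB_ne σ))
      ((map_ne_zero_iff _ hinj).mpr hD_ne), ← map_mul, ← map_mul]
    refine congrArg _ ?_
    have h1 := hBC σ
    have h2 : ((Equiv.Perm.sign σ : ℤ) : TPoly n k) * ((Equiv.Perm.sign σ : ℤ) : TPoly n k)
        = 1 := by
      rcases Int.units_eq_one_or (Equiv.Perm.sign σ) with h | h <;> rw [h] <;> norm_num
    have hCc : (MvPolynomial.C ((Equiv.Perm.sign σ : ℤ) : ℚ) : TPoly n k)
        = ((Equiv.Perm.sign σ : ℤ) : TPoly n k) := by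
      exact_mod_cast map_intCast (MvPolynomial.C : ℚ →+* TPoly n k) (Equiv.Perm.sign σ : ℤ)
    rw [hCc]
    set A := (∏ r : Fin k, ((∏ α ∈ Finset.Iio (I r), (aT α - tT (σ r))) *
      (∏ β ∈ Finset.Ioi (I r), (tT (σ r) - aT β + hT))) : TPoly n k)
    set B := (∏ m : Fin k, ∏ l ∈ Finset.Iio m,
      (tT (σ l) - tT (σ m)) * (tT (σ l) - tT (σ m) + hT) : TPoly n k)
    set Cc := (∏ m : Fin k, ∏ l ∈ Finset.Iio m, (tT (σ m) - tT (σ l) + hT) : TPoly n k)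
    set c := ((Equiv.Perm.sign σ : ℤ) : TPoly n k)
    linear_combination (-(c * A)) * h1 + (-(A * Dpoly n k)) * h2
  · -- part (ii)
    rw [pairProd (fun l m => (tT l - tT m : TPoly n k))]
    refine prod_primes_dvd'' _ _ ?_ ?_ (Npoly n k I) ?_
    · intro p hp
      have hp' : p.1 < p.2 := (Finset.mem_filter.mp hp).2
      have : (Sum.inl p.2 : Fin k ⊕ Fin n ⊕ Unit) ≠ Sum.inl p.1 := by
        simp [Sum.inl.injEq]
        exact (ne_of_lt hp').symm
      exact prime_X_sub_X this
    · intro p hp q hq hpq hdvd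
      have hp' : p.1 < p.2 := (Finset.mem_filter.mp hp).2
      have hq' : q.1 < q.2 := (Finset.mem_filter.mp hq).2
      have key : ∀ c : Fin k, c ≠ p.1 → c ≠ p.2 →
          ((c = q.1 ∧ c ≠ q.2) ∨ (c = q.2 ∧ c ≠ q.1)) → False := by
        intro c hc1 hc2 hcq
        have h0 := map_dvd (eval (fun s => if s = (Sum.inl c : Fin k ⊕ Fin n ⊕ Unit)
          then (1 : ℚ) else 0)) hdvd
        rw [map_sub, map_sub] at h0
        simp only [tT, eval_X] at h0
        rw [if_neg (by simp [Sum.inl.injEq]; exact hc1.symm),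
          if_neg (by simp [Sum.inl.injEq]; exact hc2.symm)] at h0
        rcases hcq with ⟨h1, h2⟩ | ⟨h1, h2⟩
        · rw [if_pos (by rw [h1]), if_neg (by simp [Sum.inl.injEq]; exact fun h => h2 h.symm)]
            at h0
          simp at h0
        · rw [if_neg (by simp [Sum.inl.injEq]; exact fun h => h2 h.symm),
            if_pos (by rw [h1])] at h0
          simp at h0
      by_cases h1 : q.1 = p.1
      · refine key q.2 ?_ ?_ (Or.inr ⟨rfl, (ne_of_lt hq').symm⟩)
        · rw [← h1]; exact (ne_of_lt hq').symm
        · intro h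
          exact hpq (Prod.ext h1 h).symm
      · by_cases h2 : q.1 = p.2
        · refine key q.2 ?_ ?_ (Or.inr ⟨rfl, (ne_of_lt hq').symm⟩)
          · exact (ne_of_lt (lt_trans hp' (h2 ▸ hq'))).symm
          · rw [← h2]; exact (ne_of_lt hq').symm
        · exact key q.1 h1 h2 (Or.inl ⟨rfl, ne_of_lt hq'⟩)
    · intro p hp
      have hp' : p.1 < p.2 := (Finset.mem_filter.mp hp).2
      have h0 := aeval_Npoly_eq_zero n k I p.1 p.2 (ne_of_lt hp')
      have hd := sub_dvd_sub_aeval (Sum.inl p.1 : Fin k ⊕ Fin n ⊕ Unit)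
        (Sum.inl p.2) (Npoly n k I)
      rw [h0, sub_zero] at hd
      exact hd
end

section
/- For all integers n ≥ 1 and 1 ≤ i ≤ n, the quantity F(n,1,(i)) equals the binomial coefficient C(n−1, i−1). Explicitly: (−1)^{(n−1)−i} · Σ_{j=i}^{n} [ (−1)^{j} / ((n−j)!·(j−i)!) ] · [ Σ_{p=0}^{i−1} (−1)^{p} (p + j − i)^{n−1} / ((i−1−p)!·p!) ] = C(n−1, i−1). -/
open Finset


def Rop (N : ℕ) (g : ℕ → ℚ) : ℚ :=
  ∑ m ∈ range (N+1), (-1:ℚ)^m * (N.choose m : ℚ) * g m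

lemma Rop_zero (g : ℕ → ℚ) : Rop 0 g = g 0 := by simp [Rop]

lemma Rop_succ (N : ℕ) (g : ℕ → ℚ) :
    Rop (N+1) g = Rop N g - Rop N (fun m => g (m+1)) := by
  unfold Rop
  rw [Finset.sum_range_succ' (fun m => (-1:ℚ)^m * ((N+1).choose m : ℚ) * g m) (N+1),
      Finset.sum_range_succ' (fun m => (-1:ℚ)^m * (N.choose m : ℚ) * g m) N]
  have h0 : ∑ i ∈ range (N+1), (-1:ℚ)^(i+1) * (N.choose (i+1) : ℚ) * g (i+1)
      = ∑ i ∈ range N, (-1:ℚ)^(i+1) * (N.choose (i+1) : ℚ) * g (i+1) := by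
    rw [Finset.sum_range_succ]; simp
  simp only [Nat.choose_succ_succ, Nat.cast_add, Nat.succ_eq_add_one]
  rw [show (∑ i ∈ range (N+1), (-1:ℚ)^(i+1) * ((N.choose i : ℚ) + (N.choose (i+1) : ℚ)) * g (i+1))
      = (∑ i ∈ range (N+1), (-1:ℚ)^(i+1) * (N.choose i : ℚ) * g (i+1))
        + ∑ i ∈ range (N+1), (-1:ℚ)^(i+1) * (N.choose (i+1) : ℚ) * g (i+1) by
    rw [← Finset.sum_add_distrib]; apply Finset.sum_congr rfl; intros; ring]
  rw [h0]
  have hXY : (∑ i ∈ range (N+1), (-1:ℚ)^(i+1) * (N.choose i : ℚ) * g (i+1))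
      + ∑ i ∈ range (N+1), (-1:ℚ)^i * (N.choose i : ℚ) * g (i+1) = 0 := by
    rw [← Finset.sum_add_distrib]; apply Finset.sum_eq_zero; intros; ring
  simp only [Nat.choose_zero_right, Nat.cast_one, pow_zero]
  linarith
lemma Rop_sum (N : ℕ) (s : Finset ℕ) (c : ℕ → ℚ) (h : ℕ → ℕ → ℚ) :
    Rop N (fun m => ∑ j ∈ s, c j * h j m) = ∑ j ∈ s, c j * Rop N (h j) := by
  unfold Rop
  simp only [Finset.mul_sum]
  rw [Finset.sum_comm]
  apply Finset.sum_congr rfl; intros j _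
  apply Finset.sum_congr rfl; intros m _
  ring

lemma Rop_comp (b : ℕ) : ∀ (a : ℕ) (g : ℕ → ℚ),
    Rop a (fun p => Rop b (fun t => g (p+t))) = Rop (a+b) g := by
  intro a
  induction a with
  | zero => intro g; rw [Rop_zero]; simp
  | succ a ih =>
      intro g
      rw [Rop_succ]
      have h1 : (fun p => Rop b fun t => g (p + 1 + t)) = fun p => Rop b fun t => (fun m => g (m+1)) (p + t) := by
        funext p; congr 1; funext t; congr 1; omega
      rw [h1, ih g, ih (fun m => g (m+1)), show a + 1 + b = (a + b) + 1 by omega, Rop_succ]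

lemma Rop_sub (N : ℕ) (g h : ℕ → ℚ) :
    Rop N g - Rop N h = Rop N (fun m => g m - h m) := by
  unfold Rop
  rw [← Finset.sum_sub_distrib]
  apply Finset.sum_congr rfl; intros; ring

lemma Rop_pow (c : ℕ) : ∀ e ≤ c, ∀ x : ℚ,
    Rop c (fun m => (x + m)^e) = if e = c then (-1:ℚ)^c * c.factorial else 0 := by
  induction c with
  | zero =>
      intro e he x
      interval_cases e
      simp [Rop_zero]
  | succ c ih =>
      intro e he x
      rw [Rop_succ]
      have hshift : (fun m : ℕ => (x + ((m:ℚ)+1))^e) = fun m : ℕ => ((x+1) + (m:ℚ))^e := by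
        funext m; ring_nf
      push_cast
      rcases Nat.lt_or_ge e (c+1) with hlt | hge
      · have he' : e ≤ c := by omega
        rw [show (fun m : ℕ => (x + (↑m + 1))^e) = fun m : ℕ => ((x+1) + (m:ℚ))^e from hshift]
        rw [ih e he' x, ih e he' (x+1), sub_self, if_neg (by omega)]
      · have heq : e = c + 1 := by omega
        subst heq
        rw [show (fun m : ℕ => (x + (↑m + 1))^(c+1)) = fun m : ℕ => ((x+1) + (m:ℚ))^(c+1) from hshift]
        have key : ∀ m : ℕ, (x + (m:ℚ))^(c+1) - ((x+1) + (m:ℚ))^(c+1)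
            = ∑ j ∈ range (c+1), (-(((c+1).choose j : ℕ) : ℚ)) * (x + (m:ℚ))^j := by
          intro m
          have hb := add_pow (x + (m:ℚ)) 1 (c+1)
          rw [Finset.sum_range_succ] at hb
          simp only [one_pow, mul_one, Nat.sub_self, pow_zero, Nat.choose_self, Nat.cast_one] at hb
          have : ((x+1) + (m:ℚ)) = (x + (m:ℚ)) + 1 := by ring
          rw [this, hb, show ∀ A S : ℚ, A - (S + A) = -S from fun A S => by ring,
            ← Finset.sum_neg_distrib]
          apply Finset.sum_congr rfl; intros; ring
        rw [Rop_sub]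
        simp only [key]
        rw [Rop_sum c (range (c+1)) (fun j => -(((c+1).choose j : ℕ) : ℚ)) (fun j m => (x + (m:ℚ))^j)]
        rw [Finset.sum_congr rfl (fun j hj => by
          rw [ih j (by have := Finset.mem_range.mp hj; omega : j ≤ c) x])]
        simp only [mul_ite, mul_zero]
        rw [Finset.sum_ite_eq' (range (c+1)) c]
        simp [Nat.choose_succ_self_right, Nat.factorial_succ, pow_succ]
        ring

lemma inv_fact_fact (k m : ℕ) (h : k ≤ m) :
    (1:ℚ) / (((m-k).factorial : ℚ) * (k.factorial : ℚ)) = (m.choose k : ℚ) / (m.factorial : ℚ) := by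
  have hh := Nat.choose_mul_factorial_mul_factorial h
  have h1 : ((m.choose k : ℚ)) * (k.factorial : ℚ) * ((m-k).factorial : ℚ) = (m.factorial : ℚ) := by
    exact_mod_cast congrArg (Nat.cast : ℕ → ℚ) hh
  have n1 : ((m-k).factorial : ℚ) ≠ 0 := by positivity
  have n2 : ((k).factorial : ℚ) ≠ 0 := by positivity
  have n3 : ((m).factorial : ℚ) ≠ 0 := by positivity
  field_simp
  linarith [h1]

lemma main_sum (n i : ℕ) (hi1 : 1 ≤ i) (hi2 : i ≤ n) :
    ∑ j ∈ Finset.Icc i n,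
        ((-1 : ℚ) ^ j / ((Nat.factorial (n - j) : ℚ) * (Nat.factorial (j - i) : ℚ))) *
          ∑ p ∈ Finset.range i,
            (-1 : ℚ) ^ p * ((p : ℚ) + (j : ℚ) - (i : ℚ)) ^ (n - 1) /
              ((Nat.factorial (i - 1 - p) : ℚ) * (Nat.factorial p : ℚ))
      = (-1:ℚ)^(i + (n-1)) * ((n - 1).choose (i - 1) : ℚ) := by
  set a := i - 1 with ha
  set b := n - i with hb
  set N := n - 1 with hN
  have hab : a + b = N := by omega
  -- step 1: reindex Icc
  rw [← Finset.Ico_add_one_right_eq_Icc, Finset.sum_Ico_eq_sum_range,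
    show n + 1 - i = b + 1 by omega]
  -- step 2: termwise rewrite to binomial form
  have step2 : ∀ t ∈ range (b+1),
      ((-1 : ℚ) ^ (i+t) / ((Nat.factorial (n - (i+t)) : ℚ) * (Nat.factorial ((i+t) - i) : ℚ))) *
          (∑ p ∈ Finset.range i,
            (-1 : ℚ) ^ p * ((p : ℚ) + ((i+t : ℕ) : ℚ) - (i : ℚ)) ^ (n - 1) /
              ((Nat.factorial (i - 1 - p) : ℚ) * (Nat.factorial p : ℚ)))
      = ((-1:ℚ)^i / ((a.factorial : ℚ) * (b.factorial : ℚ))) *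
          ((-1:ℚ)^t * (b.choose t : ℚ) *
            ∑ p ∈ range (a+1), (-1:ℚ)^p * (a.choose p : ℚ) * (((t+p : ℕ) : ℚ))^N) := by
    intro t ht
    have ht' : t ≤ b := by have := Finset.mem_range.mp ht; omega
    have e1 : n - (i+t) = b - t := by omega
    have e2 : (i+t) - i = t := by omega
    have e3 : range i = range (a+1) := by congr 1; omega
    rw [e1, e2, e3]
    have hinner : ∀ p ∈ range (a+1),
        (-1 : ℚ) ^ p * ((p : ℚ) + ((i+t : ℕ) : ℚ) - (i : ℚ)) ^ (n - 1) /
              ((Nat.factorial (i - 1 - p) : ℚ) * (Nat.factorial p : ℚ))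
        = ((a.choose p : ℚ) / (a.factorial : ℚ)) *
            ((-1:ℚ)^p * (((t+p : ℕ) : ℚ))^N) := by
      intro p hp
      have hp' : p ≤ a := by have := Finset.mem_range.mp hp; omega
      have e4 : i - 1 - p = a - p := by omega
      have e5 : ((p : ℚ) + ((i+t : ℕ) : ℚ) - (i : ℚ)) = ((t+p : ℕ) : ℚ) := by
        push_cast; ring
      rw [e4, e5, div_eq_mul_one_div, inv_fact_fact p a hp', hN]
      ring
    rw [Finset.sum_congr rfl hinner]
    rw [show (∑ p ∈ range (a+1), (a.choose p : ℚ) / (a.factorial : ℚ) * ((-1:ℚ)^p * (((t+p:ℕ)):ℚ)^N))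
        = (∑ p ∈ range (a+1), (-1:ℚ)^p * (a.choose p : ℚ) * (((t+p:ℕ)):ℚ)^N) / (a.factorial : ℚ) from by
      rw [Finset.sum_div]; apply Finset.sum_congr rfl; intros; ring]
    rw [div_eq_mul_one_div ((-1:ℚ)^(i+t)), inv_fact_fact t b ht', pow_add]
    have n1 : ((a.factorial : ℚ)) ≠ 0 := by positivity
    have n2 : ((b.factorial : ℚ)) ≠ 0 := by positivity
    field_simp
  rw [Finset.sum_congr rfl step2, ← Finset.mul_sum]
  have hD : (∑ t ∈ range (b+1), (-1:ℚ)^t * (b.choose t : ℚ) *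
        ∑ p ∈ range (a+1), (-1:ℚ)^p * (a.choose p : ℚ) * (((t+p : ℕ) : ℚ))^N)
      = Rop (b+a) (fun m => ((0:ℚ) + (m:ℚ))^N) := by
    rw [← Rop_comp a b (fun m => ((0:ℚ) + (m:ℚ))^N)]
    unfold Rop
    apply Finset.sum_congr rfl; intro t _
    congr 1
    apply Finset.sum_congr rfl; intro p _
    push_cast
    ring
  rw [hD, Rop_pow (b+a) N (by omega) 0, if_pos (by omega)]
  have hC : ((N.choose a : ℚ)) * (a.factorial : ℚ) * (b.factorial : ℚ) = (N.factorial : ℚ) := by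
    have := Nat.choose_mul_factorial_mul_factorial (show a ≤ N by omega)
    rw [show N - a = b by omega] at this
    exact_mod_cast congrArg (Nat.cast : ℕ → ℚ) this
  have n1 : ((a.factorial : ℚ)) ≠ 0 := by positivity
  have n2 : ((b.factorial : ℚ)) ≠ 0 := by positivity
  rw [show b + a = N by omega]
  field_simp
  rw [pow_add, ← hC]
  ring

/-- The `d`-th elementary symmetric function of a multiset of rationals. -/
def mesymm (s : Multiset ℚ) (d : ℕ) : ℚ :=
  ((Multiset.powersetCard d s).map Multiset.prod).sum

/-- The multiset `Δ(J)` of differences `j_m − j_ℓ` for `ℓ < m`. -/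
def deltaJ {n k : ℕ} (J : Fin k → Fin n) : Multiset ℚ :=
  (Finset.univ.filter fun p : Fin k × Fin k => p.1 < p.2).val.map
    fun p => ((J p.2 : ℕ) : ℚ) - ((J p.1 : ℕ) : ℚ)

/-- Weak compositions of an integer `M` into `k` parts (empty if `M < 0`). -/
def wcomps (k : ℕ) (M : ℤ) : Finset (Fin k → ℕ) :=
  if 0 ≤ M then Finset.Nat.antidiagonalTuple k M.toNat else ∅

/-- `A_J`, where the entries of `I`, `J` are the 1-based values `i_r = (I r) + 1`,
`j_r = (J r) + 1`. -/
def AJ {n k : ℕ} (I J : Fin k → Fin n) : ℚ :=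
  (-1 : ℚ) ^ (∑ r, ((J r : ℕ) + 1)) * mesymm (deltaJ J) (k.choose 2) *
    ∏ r, (1 / ((Nat.factorial (n - 1 - (J r : ℕ)) : ℚ) *
      (Nat.factorial ((J r : ℕ) - (I r : ℕ)) : ℚ)))

/-- `B_J`. -/
def BJ {n k : ℕ} (I J : Fin k → Fin n) : ℚ :=
  ∑ d ∈ Finset.range (k.choose 2 + 1),
    (-1 : ℚ) ^ d * mesymm (deltaJ J) (k.choose 2 - d) *
      ∑ lam ∈ wcomps k
          ((k : ℤ) * ((n : ℤ) - (k : ℤ) + 1) + (d : ℤ) - ∑ r, ((I r : ℕ) + 1 : ℤ)),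
        ∏ s, ∑ p ∈ Finset.range ((I s : ℕ) + 1),
          (-1 : ℚ) ^ p * ((p : ℚ) + ((J s : ℕ) : ℚ) - ((I s : ℕ) : ℚ)) ^ ((I s : ℕ) + lam s) /
            ((Nat.factorial ((I s : ℕ) - p) : ℚ) * (Nat.factorial p : ℚ))

/-- The closed combinatorial formula `F(n,k,I)`. -/
def Fint (n k : ℕ) (I : Fin k → Fin n) : ℚ :=
  (-1 : ℚ) ^ ((k : ℤ) * ((n : ℤ) - (k : ℤ)) - ∑ r, ((I r : ℕ) + 1 : ℤ)) *
    ∑ J ∈ Finset.univ.filter (fun J : Fin k → Fin n =>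
        Function.Injective J ∧ ∀ r, I r ≤ J r), AJ I J * BJ I J
/-- For `k = 1`, the closed formula `F(n,1,(i))` equals the binomial coefficient
`C(n−1, i−1)`; moreover the explicit form of the sum equals the same binomial coefficient. -/
theorem F_one_eq_binomial (n i : ℕ) (hn : 1 ≤ n) (hi1 : 1 ≤ i) (hi2 : i ≤ n) :
    Fint n 1 (fun _ => (⟨i - 1, by omega⟩ : Fin n)) = ((n - 1).choose (i - 1) : ℚ) ∧
    (-1 : ℚ) ^ (((n : ℤ) - 1) - (i : ℤ)) *
      ∑ j ∈ Finset.Icc i n,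
        ((-1 : ℚ) ^ j / ((Nat.factorial (n - j) : ℚ) * (Nat.factorial (j - i) : ℚ))) *
          ∑ p ∈ Finset.range i,
            (-1 : ℚ) ^ p * ((p : ℚ) + (j : ℚ) - (i : ℚ)) ^ (n - 1) /
              ((Nat.factorial (i - 1 - p) : ℚ) * (Nat.factorial p : ℚ)) =
      ((n - 1).choose (i - 1) : ℚ) := by
  have hval : ((⟨i - 1, by omega⟩ : Fin n) : ℕ) = i - 1 := rfl
  set I : Fin 1 → Fin n := fun _ => (⟨i - 1, by omega⟩ : Fin n) with hI
  -- evaluate AJ * BJ at a constant tuple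
  have hAB : ∀ j : Fin n, AJ I (fun _ => j) * BJ I (fun _ => j)
      = (-1:ℚ)^((j:ℕ)+1) *
          (1/(((n-1-(j:ℕ)).factorial : ℚ) * (((j:ℕ)-(i-1)).factorial : ℚ))) *
        ∑ p ∈ range i, (-1:ℚ)^p * ((p:ℚ) + ((j:ℕ):ℚ) - (((i-1:ℕ)):ℚ))^(n-1) /
          ((((i-1)-p).factorial : ℚ) * ((p.factorial : ℕ) : ℚ)) := by
    intro j
    have hms : ∀ s : Multiset ℚ, mesymm s 0 = 1 := by
      intro s; simp [mesymm]
    have hc12 : Nat.choose 1 2 = 0 := rfl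
    have hA : AJ I (fun _ => j) = (-1:ℚ)^((j:ℕ)+1) *
        (1/(((n-1-(j:ℕ)).factorial : ℚ) * (((j:ℕ)-(i-1)).factorial : ℚ))) := by
      unfold AJ
      rw [hc12, hms]
      simp [hI]
    have hM : ((1:ℕ) : ℤ) * ((n : ℤ) - (1:ℕ) + 1) + ((0:ℕ) : ℤ)
        - (∑ r : Fin 1, (((I r : ℕ)) + 1 : ℤ)) = ((n - i : ℕ) : ℤ) := by
      simp [hI, hval]
      omega
    have hB : BJ I (fun _ => j) =
        ∑ p ∈ range i, (-1:ℚ)^p * ((p:ℚ) + ((j:ℕ):ℚ) - (((i-1:ℕ)):ℚ))^(n-1) /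
          ((((i-1)-p).factorial : ℚ) * ((p.factorial : ℕ) : ℚ)) := by
      unfold BJ
      rw [hc12]
      rw [Finset.sum_range_one]
      rw [hms]
      have : ((1:ℕ) : ℤ) * ((n : ℤ) - ((1:ℕ) : ℤ) + 1) + ((0:ℕ) : ℤ)
          - (∑ r : Fin 1, (((I r : ℕ)) + 1 : ℤ)) = ((n - i : ℕ) : ℤ) := hM
      rw [show ((1:ℕ) : ℤ) * ((n : ℤ) - ((1:ℕ) : ℤ) + 1) + ((0:ℕ) : ℤ)
          - (∑ r : Fin 1, (((I r : ℕ)) + 1 : ℤ)) = ((n - i : ℕ) : ℤ) from hM]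
      unfold wcomps
      rw [if_pos (by positivity), Int.toNat_natCast, Finset.Nat.antidiagonalTuple_one,
        Finset.sum_singleton]
      rw [Fin.prod_univ_one]
      simp only [hI, hval, Matrix.cons_val_zero, pow_zero, one_mul, Nat.cast_id]
      rw [show i - 1 + (n - i) = n - 1 by omega, show i - 1 + 1 = i by omega]
    rw [hA, hB]
  -- reduce the J-sum to the explicit j-sum
  have hsum : (∑ J ∈ Finset.univ.filter (fun J : Fin 1 → Fin n =>
        Function.Injective J ∧ ∀ r, I r ≤ J r), AJ I J * BJ I J)
      = ∑ j ∈ Finset.Icc i n,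
        ((-1 : ℚ) ^ j / ((Nat.factorial (n - j) : ℚ) * (Nat.factorial (j - i) : ℚ))) *
          ∑ p ∈ Finset.range i,
            (-1 : ℚ) ^ p * ((p : ℚ) + (j : ℚ) - (i : ℚ)) ^ (n - 1) /
              ((Nat.factorial (i - 1 - p) : ℚ) * (Nat.factorial p : ℚ)) := by
    rw [Finset.sum_filter]
    rw [← Equiv.sum_comp (Equiv.funUnique (Fin 1) (Fin n)).symm
      (fun J : Fin 1 → Fin n => if Function.Injective J ∧ ∀ r, I r ≤ J r
        then AJ I J * BJ I J else 0)]
    have hconst : ∀ j : Fin n,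
        ((Equiv.funUnique (Fin 1) (Fin n)).symm j : Fin 1 → Fin n) = fun _ => j := by
      intro j; rfl
    simp only [hconst]
    have hcond : ∀ j : Fin n,
        (Function.Injective (fun _ : Fin 1 => j) ∧ ∀ r : Fin 1, I r ≤ (fun _ : Fin 1 => j) r)
          ↔ i - 1 ≤ (j : ℕ) := by
      intro j
      constructor
      · rintro ⟨-, h⟩
        have := h 0
        simpa [hI, Fin.le_def, hval] using this
      · intro h
        refine ⟨Function.injective_of_subsingleton _, fun r => ?_⟩
        simpa [hI, Fin.le_def, hval] using h
    rw [Finset.sum_congr rfl (fun j _ => by rw [if_congr (hcond j) rfl rfl, hAB j])]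
    rw [Fin.sum_univ_eq_sum_range (fun j0 => if i - 1 ≤ j0 then
      (-1:ℚ)^(j0+1) * (1/(((n-1-j0).factorial : ℚ) * ((j0-(i-1)).factorial : ℚ))) *
        ∑ p ∈ range i, (-1:ℚ)^p * ((p:ℚ) + (j0:ℚ) - (((i-1:ℕ)):ℚ))^(n-1) /
          ((((i-1)-p).factorial : ℚ) * ((p.factorial : ℕ) : ℚ)) else 0) n]
    rw [← Finset.sum_filter]
    rw [show (Finset.range n).filter (fun j0 => i - 1 ≤ j0) = Finset.Ico (i-1) n from by
      ext x; simp [Finset.mem_filter, Finset.mem_range, Finset.mem_Ico, and_comm]]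
    rw [Finset.sum_Ico_eq_sum_range, ← Finset.Ico_add_one_right_eq_Icc, Finset.sum_Ico_eq_sum_range]
    rw [show n - (i - 1) = n + 1 - i by omega]
    apply Finset.sum_congr rfl
    intro t ht
    have ht' : t ≤ n - i := by have := Finset.mem_range.mp ht; omega
    have e1 : i - 1 + t + 1 = i + t := by omega
    have e2 : n - 1 - (i - 1 + t) = n - (i + t) := by omega
    have e3 : i - 1 + t - (i - 1) = t := by omega
    have e4 : i + t - i = t := by omega
    rw [e1, e2, e3, e4]
    congr 1
    · ring
    apply Finset.sum_congr rfl
    intro p _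
    congr 2
    push_cast [Nat.cast_sub hi1]
    ring
  -- the key evaluation
  have hE := main_sum n i hi1 hi2
  have hsign : ∀ z : ℤ, z = ((n : ℤ) - 1) - (i : ℤ) →
      (-1:ℚ)^z * ((-1:ℚ)^(i + (n-1)) * ((n - 1).choose (i - 1) : ℚ))
        = ((n - 1).choose (i - 1) : ℚ) := by
    intro z hz
    have h1 : ((-1:ℚ)^(i + (n-1) : ℕ)) = (-1:ℚ)^((i + (n-1) : ℕ) : ℤ) := by
      rw [zpow_natCast]
    rw [← mul_assoc, h1, ← zpow_add₀ (by norm_num : (-1:ℚ) ≠ 0)]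
    rw [show z + ((i + (n-1) : ℕ) : ℤ) = 2 * ((n:ℤ) - 1) by push_cast; omega]
    rw [zpow_mul]
    norm_num
  constructor
  · unfold Fint
    rw [hsum, hE]
    exact hsign _ (by simp [hI, hval]; omega)
  · rw [hE]
    exact hsign _ rfl
end

section
/- For all integers n ≥ 3 and 1 ≤ i_1 < i_2 ≤ n, the rational number g(n,i_1,i_2) is an integer. -/
/-- The closed formula `g(n,i_1,i_2)` for the entries of the `Gr_2`-simplex. -/
def gval (n i1 i2 : ℕ) : ℚ :=
  ((Nat.factorial (n - 2) : ℚ) * (Nat.factorial (n - 3) : ℚ)) /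
      ((Nat.factorial (i1 - 1) : ℚ) * (Nat.factorial (i2 - 1) : ℚ) *
        (Nat.factorial (n - i1) : ℚ) * (Nat.factorial (n - i2) : ℚ)) *
    (-3 * (i1 : ℚ) + (i2 : ℚ) - (i1 : ℚ) ^ 2 + 4 * (i1 : ℚ) * (i2 : ℚ) - (i2 : ℚ) ^ 2 +
      (n : ℚ) * (2 * ((i1 : ℚ) - 2 * (i2 : ℚ) + 1) + ((i2 : ℚ) - (i1 : ℚ)) ^ 2) +
      (n : ℚ) ^ 2 * ((i2 : ℚ) - (i1 : ℚ)))
/-- The rational number `g(n,i_1,i_2)` is an integer. -/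
theorem g_is_integer (n i1 i2 : ℕ) (hn : 3 ≤ n) (h1 : 1 ≤ i1) (h12 : i1 < i2) (h2 : i2 ≤ n) :
    ∃ m : ℤ, gval n i1 i2 = (m : ℚ) := by
  have nz : ∀ k : ℕ, (k.factorial : ℚ) ≠ 0 := fun k =>
    Nat.cast_ne_zero.mpr k.factorial_ne_zero
  obtain ⟨a, rfl⟩ : ∃ a, i1 = a + 1 := ⟨i1 - 1, by omega⟩
  rcases Nat.lt_or_ge i2 n with hlt | hge
  · -- main case : i2 < n
    obtain ⟨b, rfl⟩ : ∃ b, i2 = a + b + 2 := ⟨i2 - a - 2, by omega⟩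
    obtain ⟨c, rfl⟩ : ∃ c, n = a + b + c + 3 := ⟨n - a - b - 3, by omega⟩
    refine ⟨(((a+b+c+1).choose a : ℤ) * ((a+b+c+1).choose (a+b)) +
        ((a+b+c).choose a : ℤ) * ((a+b+c+1).choose (a+b+1)) +
        ((a+b+c).choose a : ℤ) * ((a+b+c+1).choose (a+b)) -
        ((a+b+c+2).choose a : ℤ) * ((a+b+c).choose (a+b)) -
        ((a+b+c+1).choose a : ℤ) * ((a+b+c+1).choose (a+b+1))), ?_⟩
    rw [gval]
    rw [show a + b + c + 3 - 2 = a + b + c + 1 by omega,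
        show a + b + c + 3 - 3 = a + b + c by omega,
        show a + 1 - 1 = a by omega,
        show a + b + 2 - 1 = a + b + 1 by omega,
        show a + b + c + 3 - (a + 1) = b + c + 2 by omega,
        show a + b + c + 3 - (a + b + 2) = c + 1 by omega]
    push_cast
    rw [Nat.cast_choose ℚ (show a ≤ a+b+c+1 by omega),
        Nat.cast_choose ℚ (show a+b ≤ a+b+c+1 by omega),
        Nat.cast_choose ℚ (show a ≤ a+b+c by omega),
        Nat.cast_choose ℚ (show a+b+1 ≤ a+b+c+1 by omega),
        Nat.cast_choose ℚ (show a ≤ a+b+c+2 by omega),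
        Nat.cast_choose ℚ (show a+b ≤ a+b+c by omega)]
    rw [show a + b + c + 1 - a = b + c + 1 by omega,
        show a + b + c + 1 - (a + b) = c + 1 by omega,
        show a + b + c - a = b + c by omega,
        show a + b + c + 1 - (a + b + 1) = c by omega,
        show a + b + c + 2 - a = b + c + 2 by omega,
        show a + b + c - (a + b) = c by omega]
    have f1 : ((a+b+1).factorial : ℚ) = (a+b+1) * (a+b).factorial := by
      rw [show a+b+1 = (a+b)+1 by omega, Nat.factorial_succ]; push_cast; ring
    have f2 : ((a+b+c+1).factorial : ℚ) = (a+b+c+1) * (a+b+c).factorial := by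
      rw [show a+b+c+1 = (a+b+c)+1 by omega, Nat.factorial_succ]; push_cast; ring
    have f3 : ((a+b+c+2).factorial : ℚ) = (a+b+c+2) * ((a+b+c+1) * (a+b+c).factorial) := by
      rw [show a+b+c+2 = (a+b+c+1)+1 by omega, Nat.factorial_succ]; push_cast; rw [f2]; ring
    have f4 : ((b+c+1).factorial : ℚ) = (b+c+1) * (b+c).factorial := by
      rw [show b+c+1 = (b+c)+1 by omega, Nat.factorial_succ]; push_cast; ring
    have f5 : ((b+c+2).factorial : ℚ) = (b+c+2) * ((b+c+1) * (b+c).factorial) := by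
      rw [show b+c+2 = (b+c)+1+1 by omega, Nat.factorial_succ, Nat.factorial_succ]
      push_cast; ring
    have f6 : ((c+1).factorial : ℚ) = (c+1) * c.factorial := by
      rw [Nat.factorial_succ]; push_cast; ring
    rw [f1, f2, f3, f4, f5, f6]
    have p1 : ((a:ℚ)+b+1) ≠ 0 := by positivity
    have p2 : ((a:ℚ)+b+c+1) ≠ 0 := by positivity
    have p3 : ((a:ℚ)+b+c+2) ≠ 0 := by positivity
    have p4 : ((b:ℚ)+c+1) ≠ 0 := by positivity
    have p5 : ((b:ℚ)+c+2) ≠ 0 := by positivity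
    have p6 : ((c:ℚ)+1) ≠ 0 := by positivity
    field_simp
    ring
  · -- boundary case : i2 = n
    have hi2 : i2 = n := le_antisymm h2 hge
    subst hi2
    rcases Nat.lt_or_ge (a + 1) (i2 - 1) with hlt' | hge'
    · -- i1 < n - 1
      obtain ⟨e, rfl⟩ : ∃ e, i2 = a + e + 3 := ⟨i2 - a - 3, by omega⟩
      refine ⟨((a+e+1).choose a : ℤ) + ((a+e).choose a : ℤ), ?_⟩
      rw [gval]
      rw [show a + e + 3 - 2 = a + e + 1 by omega,
          show a + e + 3 - 3 = a + e by omega,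
          show a + 1 - 1 = a by omega,
          show a + e + 3 - 1 = a + e + 2 by omega,
          show a + e + 3 - (a + 1) = e + 2 by omega,
          show a + e + 3 - (a + e + 3) = 0 by omega]
      push_cast
      rw [Nat.cast_choose ℚ (show a ≤ a+e+1 by omega),
          Nat.cast_choose ℚ (show a ≤ a+e by omega)]
      rw [show a + e + 1 - a = e + 1 by omega, show a + e - a = e by omega]
      have f1 : ((a+e+1).factorial : ℚ) = (a+e+1) * (a+e).factorial := by
        rw [show a+e+1 = (a+e)+1 by omega, Nat.factorial_succ]; push_cast; ring
      have f2 : ((a+e+2).factorial : ℚ) = (a+e+2) * ((a+e+1) * (a+e).factorial) := by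
        rw [show a+e+2 = (a+e)+1+1 by omega, Nat.factorial_succ, Nat.factorial_succ]
        push_cast; ring
      have f3 : ((e+1).factorial : ℚ) = (e+1) * e.factorial := by
        rw [Nat.factorial_succ]; push_cast; ring
      have f4 : ((e+2).factorial : ℚ) = (e+2) * ((e+1) * e.factorial) := by
        rw [show e+2 = e+1+1 by omega, Nat.factorial_succ, Nat.factorial_succ]
        push_cast; ring
      rw [f1, f2, f3, f4, Nat.factorial_zero]
      have p1 : ((a:ℚ)+e+1) ≠ 0 := by positivity
      have p2 : ((a:ℚ)+e+2) ≠ 0 := by positivity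
      have p3 : ((e:ℚ)+1) ≠ 0 := by positivity
      have p4 : ((e:ℚ)+2) ≠ 0 := by positivity
      field_simp
      ring
    · -- i1 = n - 1
      obtain ⟨m, rfl⟩ : ∃ m, i2 = m + 3 := ⟨i2 - 3, by omega⟩
      have ha : a = m + 1 := by omega
      subst ha
      refine ⟨1, ?_⟩
      rw [gval]
      rw [show m + 3 - 2 = m + 1 by omega,
          show m + 3 - 3 = m by omega,
          show m + 1 + 1 - 1 = m + 1 by omega,
          show m + 3 - 1 = m + 2 by omega,
          show m + 3 - (m + 1 + 1) = 1 by omega,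
          show m + 3 - (m + 3) = 0 by omega]
      have f1 : ((m+1).factorial : ℚ) = (m+1) * m.factorial := by
        rw [Nat.factorial_succ]; push_cast; ring
      have f2 : ((m+2).factorial : ℚ) = (m+2) * ((m+1) * m.factorial) := by
        rw [show m+2 = m+1+1 by omega, Nat.factorial_succ, Nat.factorial_succ]
        push_cast; ring
      rw [f1, f2, Nat.factorial_one, Nat.factorial_zero]
      have p1 : ((m:ℚ)+1) ≠ 0 := by positivity
      have p2 : ((m:ℚ)+2) ≠ 0 := by positivity
      push_cast
      field_simp
      ring
end

section
/- Define g'(m,a,b) := g(m,a,b) if m ≥ 3 and 1 ≤ a < b ≤ m, and g'(m,a,b) := 0 otherwise. Then for all integers n ≥ 4 and 1 ≤ i < j ≤ n with j − i ≥ 2 (i.e., i and j are not consecutive): g(n,i,j) = g'(n−1,i,j) + g'(n−1,i−1,j) + g'(n−1,i,j−1) + g'(n−1,i−1,j−1). (This is the 4-neighbor addition rule for the non-consecutive entries of the Gr_2-simplex.) -/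
/-- `g'(m,a,b)`: equal to `g(m,a,b)` if `m ≥ 3` and `1 ≤ a < b ≤ m`, and `0` otherwise. -/
def gval' (m a b : ℕ) : ℚ :=
  if 3 ≤ m ∧ 1 ≤ a ∧ a < b ∧ b ≤ m then gval m a b else 0

/-- The polynomial factor in `gval`. -/
def gpoly (n i1 i2 : ℕ) : ℚ :=
  (-3 * (i1 : ℚ) + (i2 : ℚ) - (i1 : ℚ) ^ 2 + 4 * (i1 : ℚ) * (i2 : ℚ) - (i2 : ℚ) ^ 2 +
      (n : ℚ) * (2 * ((i1 : ℚ) - 2 * (i2 : ℚ) + 1) + ((i2 : ℚ) - (i1 : ℚ)) ^ 2) +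
      (n : ℚ) ^ 2 * ((i2 : ℚ) - (i1 : ℚ)))

lemma gval_eq (n i1 i2 : ℕ) : gval n i1 i2 =
    ((Nat.factorial (n - 2) : ℚ) * (Nat.factorial (n - 3) : ℚ)) /
      ((Nat.factorial (i1 - 1) : ℚ) * (Nat.factorial (i2 - 1) : ℚ) *
        (Nat.factorial (n - i1) : ℚ) * (Nat.factorial (n - i2) : ℚ)) * gpoly n i1 i2 := rfl

lemma fq1 (k : ℕ) : ((Nat.factorial (k+1)):ℚ) = ((k:ℚ)+1) * Nat.factorial k := by
  rw [Nat.factorial_succ]; push_cast; ring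

lemma gval'_pos {m a b : ℕ} (h : 3 ≤ m ∧ 1 ≤ a ∧ a < b ∧ b ≤ m) : gval' m a b = gval m a b :=
  if_pos h

lemma gval'_neg {m a b : ℕ} (h : ¬(3 ≤ m ∧ 1 ≤ a ∧ a < b ∧ b ≤ m)) : gval' m a b = 0 :=
  if_neg h

/-- Case A : `i = 1`, `j = n`. -/
lemma keyA (c : ℕ) : gval (c+4) 1 (c+4) = gval (c+3) 1 (c+3) := by
  have hB : (Nat.factorial (c+3) : ℚ) ≠ 0 := by positivity
  set C : ℚ := ((Nat.factorial (c+1) : ℚ) * (Nat.factorial c : ℚ)) /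
      ((Nat.factorial (c+3) : ℚ) * (Nat.factorial (c+3) : ℚ)) with hCdef
  have e0 : gval (c+4) 1 (c+4)
      = C * (((c:ℚ)+2) * ((c:ℚ)+1) * gpoly (c+4) 1 (c+4)) := by
    rw [gval_eq, hCdef,
      show c+4-2 = c+2 by omega, show c+4-3 = c+1 by omega,
      show (1:ℕ)-1 = 0 by omega, show c+4-1 = c+3 by omega,
      show c+4-(c+4) = 0 by omega,
      show c+2 = (c+1)+1 from rfl, fq1 (c+1), fq1 c]
    have h1 : (Nat.factorial c : ℚ) ≠ 0 := by positivity
    simp only [Nat.factorial_zero]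
    push_cast
    field_simp
    ring
  have e1 : gval (c+3) 1 (c+3)
      = C * (((c:ℚ)+3) * ((c:ℚ)+3) * gpoly (c+3) 1 (c+3)) := by
    rw [gval_eq, hCdef,
      show c+3-2 = c+1 by omega, show c+3-3 = c by omega,
      show (1:ℕ)-1 = 0 by omega, show c+3-1 = c+2 by omega,
      show c+3-(c+3) = 0 by omega,
      show c+3 = (c+2)+1 from rfl, fq1 (c+2)]
    have h1 : (Nat.factorial (c+2) : ℚ) ≠ 0 := by positivity
    simp only [Nat.factorial_zero]
    push_cast
    field_simp
    ring
  rw [e0, e1]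
  congr 1
  simp only [gpoly]
  push_cast
  ring

/-- Case B : `i = 1`, `j < n`. -/
lemma keyB (c d : ℕ) : gval (c+d+4) 1 (c+3)
    = gval (c+d+3) 1 (c+3) + gval (c+d+3) 1 (c+2) := by
  have hB : (Nat.factorial (c+2) : ℚ) ≠ 0 := by positivity
  have hC : (Nat.factorial (c+d+3) : ℚ) ≠ 0 := by positivity
  have hD : (Nat.factorial (d+1) : ℚ) ≠ 0 := by positivity
  set C : ℚ := ((Nat.factorial (c+d+1) : ℚ) * (Nat.factorial (c+d) : ℚ)) /
      ((Nat.factorial (c+2) : ℚ) * (Nat.factorial (c+d+3) : ℚ) *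
        (Nat.factorial (d+1) : ℚ)) with hCdef
  have e0 : gval (c+d+4) 1 (c+3)
      = C * (((c+d:ℚ)+2) * ((c+d:ℚ)+1) * gpoly (c+d+4) 1 (c+3)) := by
    rw [gval_eq, hCdef,
      show c+d+4-2 = c+d+2 by omega, show c+d+4-3 = c+d+1 by omega,
      show (1:ℕ)-1 = 0 by omega, show c+3-1 = c+2 by omega,
      show c+d+4-1 = c+d+3 by omega, show c+d+4-(c+3) = d+1 by omega,
      show c+d+2 = (c+d+1)+1 from rfl, fq1 (c+d+1),
      show c+d+1 = (c+d)+1 from rfl, fq1 (c+d)]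
    have h1 : (Nat.factorial (c+d) : ℚ) ≠ 0 := by positivity
    simp only [Nat.factorial_zero]
    push_cast
    field_simp
    ring
  have e1 : gval (c+d+3) 1 (c+3)
      = C * (((c+d:ℚ)+3) * ((d:ℚ)+1) * gpoly (c+d+3) 1 (c+3)) := by
    rw [gval_eq, hCdef,
      show c+d+3-2 = c+d+1 by omega, show c+d+3-3 = c+d by omega,
      show (1:ℕ)-1 = 0 by omega, show c+3-1 = c+2 by omega,
      show c+d+3-1 = c+d+2 by omega, show c+d+3-(c+3) = d by omega,
      show c+d+3 = (c+d+2)+1 from rfl, fq1 (c+d+2), fq1 d]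
    have h1 : (Nat.factorial (c+d+2) : ℚ) ≠ 0 := by positivity
    have h2 : (Nat.factorial d : ℚ) ≠ 0 := by positivity
    simp only [Nat.factorial_zero]
    push_cast
    field_simp
    ring
  have e2 : gval (c+d+3) 1 (c+2)
      = C * (((c:ℚ)+2) * ((c+d:ℚ)+3) * gpoly (c+d+3) 1 (c+2)) := by
    rw [gval_eq, hCdef,
      show c+d+3-2 = c+d+1 by omega, show c+d+3-3 = c+d by omega,
      show (1:ℕ)-1 = 0 by omega, show c+2-1 = c+1 by omega,
      show c+d+3-1 = c+d+2 by omega, show c+d+3-(c+2) = d+1 by omega,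
      show c+2 = (c+1)+1 from rfl, fq1 (c+1),
      show c+d+3 = (c+d+2)+1 from rfl, fq1 (c+d+2)]
    have h1 : (Nat.factorial (c+1) : ℚ) ≠ 0 := by positivity
    have h2 : (Nat.factorial (c+d+2) : ℚ) ≠ 0 := by positivity
    simp only [Nat.factorial_zero]
    push_cast
    field_simp
    ring
  rw [e0, e1, e2, ← mul_add]
  congr 1
  simp only [gpoly]
  push_cast
  ring

/-- Case C : `2 ≤ i`, `j = n`. -/
lemma keyC (a c : ℕ) : gval (a+c+4) (a+2) (a+c+4)
    = gval (a+c+3) (a+2) (a+c+3) + gval (a+c+3) (a+1) (a+c+3) := by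
  have hA : (Nat.factorial (a+1) : ℚ) ≠ 0 := by positivity
  have hB : (Nat.factorial (a+c+3) : ℚ) ≠ 0 := by positivity
  have hC : (Nat.factorial (c+2) : ℚ) ≠ 0 := by positivity
  set C : ℚ := ((Nat.factorial (a+c+1) : ℚ) * (Nat.factorial (a+c) : ℚ)) /
      ((Nat.factorial (a+1) : ℚ) * (Nat.factorial (a+c+3) : ℚ) *
        (Nat.factorial (c+2) : ℚ)) with hCdef
  have e0 : gval (a+c+4) (a+2) (a+c+4)
      = C * (((a+c:ℚ)+2) * ((a+c:ℚ)+1) * gpoly (a+c+4) (a+2) (a+c+4)) := by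
    rw [gval_eq, hCdef,
      show a+c+4-2 = a+c+2 by omega, show a+c+4-3 = a+c+1 by omega,
      show a+2-1 = a+1 by omega, show a+c+4-1 = a+c+3 by omega,
      show a+c+4-(a+2) = c+2 by omega, show a+c+4-(a+c+4) = 0 by omega,
      show a+c+2 = (a+c+1)+1 from rfl, fq1 (a+c+1),
      show a+c+1 = (a+c)+1 from rfl, fq1 (a+c)]
    have h1 : (Nat.factorial (a+c) : ℚ) ≠ 0 := by positivity
    simp only [Nat.factorial_zero]
    push_cast
    field_simp
    ring
  have e1 : gval (a+c+3) (a+2) (a+c+3)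
      = C * (((a+c:ℚ)+3) * ((c:ℚ)+2) * gpoly (a+c+3) (a+2) (a+c+3)) := by
    rw [gval_eq, hCdef,
      show a+c+3-2 = a+c+1 by omega, show a+c+3-3 = a+c by omega,
      show a+2-1 = a+1 by omega, show a+c+3-1 = a+c+2 by omega,
      show a+c+3-(a+2) = c+1 by omega, show a+c+3-(a+c+3) = 0 by omega,
      show a+c+3 = (a+c+2)+1 from rfl, fq1 (a+c+2),
      show c+2 = (c+1)+1 from rfl, fq1 (c+1)]
    have h1 : (Nat.factorial (a+c+2) : ℚ) ≠ 0 := by positivity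
    have h2 : (Nat.factorial (c+1) : ℚ) ≠ 0 := by positivity
    simp only [Nat.factorial_zero]
    push_cast
    field_simp
    ring
  have e2 : gval (a+c+3) (a+1) (a+c+3)
      = C * (((a:ℚ)+1) * ((a+c:ℚ)+3) * gpoly (a+c+3) (a+1) (a+c+3)) := by
    rw [gval_eq, hCdef,
      show a+c+3-2 = a+c+1 by omega, show a+c+3-3 = a+c by omega,
      show a+1-1 = a by omega, show a+c+3-1 = a+c+2 by omega,
      show a+c+3-(a+1) = c+2 by omega, show a+c+3-(a+c+3) = 0 by omega,
      fq1 a,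
      show a+c+3 = (a+c+2)+1 from rfl, fq1 (a+c+2)]
    have h1 : (Nat.factorial a : ℚ) ≠ 0 := by positivity
    have h2 : (Nat.factorial (a+c+2) : ℚ) ≠ 0 := by positivity
    simp only [Nat.factorial_zero]
    push_cast
    field_simp
    ring
  rw [e0, e1, e2, ← mul_add]
  congr 1
  simp only [gpoly]
  push_cast
  ring

/-- Case D : `2 ≤ i`, `j < n`. -/
lemma keyD (a c d : ℕ) :
    gval (a+c+d+5) (a+2) (a+c+4) =
      gval (a+c+d+4) (a+2) (a+c+4) + gval (a+c+d+4) (a+1) (a+c+4)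
      + gval (a+c+d+4) (a+2) (a+c+3) + gval (a+c+d+4) (a+1) (a+c+3) := by
  have hA : (Nat.factorial (a+1) : ℚ) ≠ 0 := by positivity
  have hB : (Nat.factorial (a+c+3) : ℚ) ≠ 0 := by positivity
  have hC : (Nat.factorial (c+d+3) : ℚ) ≠ 0 := by positivity
  have hD : (Nat.factorial (d+1) : ℚ) ≠ 0 := by positivity
  set C : ℚ := ((Nat.factorial (a+c+d+2) : ℚ) * (Nat.factorial (a+c+d+1) : ℚ)) /
      ((Nat.factorial (a+1) : ℚ) * (Nat.factorial (a+c+3) : ℚ) *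
        (Nat.factorial (c+d+3) : ℚ) * (Nat.factorial (d+1) : ℚ)) with hCdef
  have e0 : gval (a+c+d+5) (a+2) (a+c+4)
      = C * (((a+c+d:ℚ)+3) * ((a+c+d:ℚ)+2) * gpoly (a+c+d+5) (a+2) (a+c+4)) := by
    rw [gval_eq, hCdef,
      show a+c+d+5-2 = a+c+d+3 by omega, show a+c+d+5-3 = a+c+d+2 by omega,
      show a+2-1 = a+1 by omega, show a+c+4-1 = a+c+3 by omega,
      show a+c+d+5-(a+2) = c+d+3 by omega, show a+c+d+5-(a+c+4) = d+1 by omega,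
      show a+c+d+3 = (a+c+d+2)+1 from rfl, fq1 (a+c+d+2),
      show a+c+d+2 = (a+c+d+1)+1 from rfl, fq1 (a+c+d+1)]
    push_cast
    field_simp
    ring
  have e1 : gval (a+c+d+4) (a+2) (a+c+4)
      = C * (((d:ℚ)+1) * ((c+d:ℚ)+3) * gpoly (a+c+d+4) (a+2) (a+c+4)) := by
    rw [gval_eq, hCdef,
      show a+c+d+4-2 = a+c+d+2 by omega, show a+c+d+4-3 = a+c+d+1 by omega,
      show a+2-1 = a+1 by omega, show a+c+4-1 = a+c+3 by omega,
      show a+c+d+4-(a+2) = c+d+2 by omega, show a+c+d+4-(a+c+4) = d by omega,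
      show c+d+3 = (c+d+2)+1 from rfl, fq1 (c+d+2), fq1 d]
    have h1 : (Nat.factorial (c+d+2) : ℚ) ≠ 0 := by positivity
    have h2 : (Nat.factorial d : ℚ) ≠ 0 := by positivity
    push_cast
    field_simp
    ring
  have e2 : gval (a+c+d+4) (a+1) (a+c+4)
      = C * (((a:ℚ)+1) * ((d:ℚ)+1) * gpoly (a+c+d+4) (a+1) (a+c+4)) := by
    rw [gval_eq, hCdef,
      show a+c+d+4-2 = a+c+d+2 by omega, show a+c+d+4-3 = a+c+d+1 by omega,
      show a+1-1 = a by omega, show a+c+4-1 = a+c+3 by omega,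
      show a+c+d+4-(a+1) = c+d+3 by omega, show a+c+d+4-(a+c+4) = d by omega,
      fq1 a, fq1 d]
    have h1 : (Nat.factorial a : ℚ) ≠ 0 := by positivity
    have h2 : (Nat.factorial d : ℚ) ≠ 0 := by positivity
    push_cast
    field_simp
  have e3 : gval (a+c+d+4) (a+2) (a+c+3)
      = C * (((a+c:ℚ)+3) * ((c+d:ℚ)+3) * gpoly (a+c+d+4) (a+2) (a+c+3)) := by
    rw [gval_eq, hCdef,
      show a+c+d+4-2 = a+c+d+2 by omega, show a+c+d+4-3 = a+c+d+1 by omega,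
      show a+2-1 = a+1 by omega, show a+c+3-1 = a+c+2 by omega,
      show a+c+d+4-(a+2) = c+d+2 by omega, show a+c+d+4-(a+c+3) = d+1 by omega,
      show a+c+3 = (a+c+2)+1 from rfl, fq1 (a+c+2),
      show c+d+3 = (c+d+2)+1 from rfl, fq1 (c+d+2)]
    have h1 : (Nat.factorial (a+c+2) : ℚ) ≠ 0 := by positivity
    have h2 : (Nat.factorial (c+d+2) : ℚ) ≠ 0 := by positivity
    push_cast
    field_simp
    ring
  have e4 : gval (a+c+d+4) (a+1) (a+c+3)
      = C * (((a:ℚ)+1) * ((a+c:ℚ)+3) * gpoly (a+c+d+4) (a+1) (a+c+3)) := by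
    rw [gval_eq, hCdef,
      show a+c+d+4-2 = a+c+d+2 by omega, show a+c+d+4-3 = a+c+d+1 by omega,
      show a+1-1 = a by omega, show a+c+3-1 = a+c+2 by omega,
      show a+c+d+4-(a+1) = c+d+3 by omega, show a+c+d+4-(a+c+3) = d+1 by omega,
      fq1 a,
      show a+c+3 = (a+c+2)+1 from rfl, fq1 (a+c+2)]
    have h1 : (Nat.factorial a : ℚ) ≠ 0 := by positivity
    have h2 : (Nat.factorial (a+c+2) : ℚ) ≠ 0 := by positivity
    push_cast
    field_simp
    ring
  rw [e0, e1, e2, e3, e4, ← mul_add, ← mul_add, ← mul_add]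
  congr 1
  simp only [gpoly]
  push_cast
  ring

/-- 4-neighbor addition for the non-consecutive entries of the `Gr_2`-simplex. -/
theorem four_neighbor_addition_nonconsecutive (n i j : ℕ) (hn : 4 ≤ n) (h1 : 1 ≤ i)
    (hij : i < j) (hj : j ≤ n) (hsep : 2 ≤ j - i) :
    gval n i j =
      gval' (n - 1) i j + gval' (n - 1) (i - 1) j + gval' (n - 1) i (j - 1) +
        gval' (n - 1) (i - 1) (j - 1) := by
  rcases Nat.lt_or_ge i 2 with hi2 | hi2
  · -- i = 1
    have hi : i = 1 := by omega
    subst hi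
    rcases Nat.lt_or_ge j n with hjn | hjn
    · -- Case B : j < n
      obtain ⟨c, rfl⟩ : ∃ c, j = c+3 := ⟨j-3, by omega⟩
      obtain ⟨d, rfl⟩ : ∃ d, n = c+d+4 := ⟨n-c-4, by omega⟩
      rw [show c+d+4-1 = c+d+3 by omega, show (1:ℕ)-1 = 0 by omega,
        show c+3-1 = c+2 by omega,
        gval'_pos (show 3 ≤ c+d+3 ∧ 1 ≤ 1 ∧ 1 < c+3 ∧ c+3 ≤ c+d+3 by omega),
        gval'_neg (show ¬(3 ≤ c+d+3 ∧ 1 ≤ 0 ∧ 0 < c+3 ∧ c+3 ≤ c+d+3) by omega),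
        gval'_pos (show 3 ≤ c+d+3 ∧ 1 ≤ 1 ∧ 1 < c+2 ∧ c+2 ≤ c+d+3 by omega),
        gval'_neg (show ¬(3 ≤ c+d+3 ∧ 1 ≤ 0 ∧ 0 < c+2 ∧ c+2 ≤ c+d+3) by omega)]
      have := keyB c d
      linarith [keyB c d]
    · -- Case A : j = n
      have hjn' : j = n := le_antisymm hj hjn
      subst hjn'
      obtain ⟨c, rfl⟩ : ∃ c, j = c+4 := ⟨j-4, by omega⟩
      rw [show c+4-1 = c+3 by omega, show (1:ℕ)-1 = 0 by omega,
        gval'_neg (show ¬(3 ≤ c+3 ∧ 1 ≤ 1 ∧ 1 < c+4 ∧ c+4 ≤ c+3) by omega),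
        gval'_neg (show ¬(3 ≤ c+3 ∧ 1 ≤ 0 ∧ 0 < c+4 ∧ c+4 ≤ c+3) by omega),
        gval'_pos (show 3 ≤ c+3 ∧ 1 ≤ 1 ∧ 1 < c+3 ∧ c+3 ≤ c+3 by omega),
        gval'_neg (show ¬(3 ≤ c+3 ∧ 1 ≤ 0 ∧ 0 < c+3 ∧ c+3 ≤ c+3) by omega)]
      linarith [keyA c]
  · -- 2 ≤ i
    obtain ⟨a, rfl⟩ : ∃ a, i = a+2 := ⟨i-2, by omega⟩
    rcases Nat.lt_or_ge j n with hjn | hjn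
    · -- Case D : j < n
      obtain ⟨c, rfl⟩ : ∃ c, j = a+c+4 := ⟨j-a-4, by omega⟩
      obtain ⟨d, rfl⟩ : ∃ d, n = a+c+d+5 := ⟨n-a-c-5, by omega⟩
      rw [show a+c+d+5-1 = a+c+d+4 by omega, show a+2-1 = a+1 by omega,
        show a+c+4-1 = a+c+3 by omega,
        gval'_pos (show 3 ≤ a+c+d+4 ∧ 1 ≤ a+2 ∧ a+2 < a+c+4 ∧ a+c+4 ≤ a+c+d+4 by omega),
        gval'_pos (show 3 ≤ a+c+d+4 ∧ 1 ≤ a+1 ∧ a+1 < a+c+4 ∧ a+c+4 ≤ a+c+d+4 by omega),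
        gval'_pos (show 3 ≤ a+c+d+4 ∧ 1 ≤ a+2 ∧ a+2 < a+c+3 ∧ a+c+3 ≤ a+c+d+4 by omega),
        gval'_pos (show 3 ≤ a+c+d+4 ∧ 1 ≤ a+1 ∧ a+1 < a+c+3 ∧ a+c+3 ≤ a+c+d+4 by omega)]
      linarith [keyD a c d]
    · -- Case C : j = n
      have hjn' : j = n := le_antisymm hj hjn
      subst hjn'
      obtain ⟨c, rfl⟩ : ∃ c, j = a+c+4 := ⟨j-a-4, by omega⟩
      rw [show a+c+4-1 = a+c+3 by omega, show a+2-1 = a+1 by omega,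
        gval'_neg (show ¬(3 ≤ a+c+3 ∧ 1 ≤ a+2 ∧ a+2 < a+c+4 ∧ a+c+4 ≤ a+c+3) by omega),
        gval'_neg (show ¬(3 ≤ a+c+3 ∧ 1 ≤ a+1 ∧ a+1 < a+c+4 ∧ a+c+4 ≤ a+c+3) by omega),
        gval'_pos (show 3 ≤ a+c+3 ∧ 1 ≤ a+2 ∧ a+2 < a+c+3 ∧ a+c+3 ≤ a+c+3 by omega),
        gval'_pos (show 3 ≤ a+c+3 ∧ 1 ≤ a+1 ∧ a+1 < a+c+3 ∧ a+c+3 ≤ a+c+3 by omega)]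
      linarith [keyC a c]
end

section
/- For all integers n > 3 and 1 < i ≤ n−1: g(n, i, i+1) = N(n−2, i) + N(n−2, i−1), where N(m,r) denotes the Narayana numbers. (This is the rule for the consecutive-index entries of the Gr_2-simplex.) -/
/-- The Narayana number `N(m,r) = (1/m)·C(m,r)·C(m,r−1)`. -/
def narayana (m r : ℕ) : ℚ :=
  (1 / (m : ℚ)) * (m.choose r : ℚ) * (m.choose (r - 1) : ℚ)

/-- The consecutive-index entries of the `Gr_2`-simplex are sums of two Narayana numbers. -/
theorem consecutive_entries_eq_narayana (n i : ℕ) (hn : 3 < n) (h1 : 1 < i)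
    (h2 : i ≤ n - 1) :
    gval n i (i + 1) = narayana (n - 2) i + narayana (n - 2) (i - 1) := by
  obtain ⟨a, b, hi, hnn⟩ : ∃ a b, i = a + 2 ∧ n = a + b + 3 :=
    ⟨i - 2, n - i - 1, by omega, by omega⟩
  subst hi hnn
  simp only [gval, narayana]
  have e1 : a + b + 3 - 2 = a + b + 1 := by omega
  have e2 : a + b + 3 - 3 = a + b := by omega
  have e3 : a + 2 - 1 = a + 1 := by omega
  have e4 : a + 2 + 1 - 1 = a + 2 := by omega
  have e5 : a + b + 3 - (a + 2) = b + 1 := by omega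
  have e6 : a + b + 3 - (a + 2 + 1) = b := by omega
  rw [e1, e2, e3, e4, e5, e6]
  have fpos : ∀ k : ℕ, (Nat.factorial k : ℚ) ≠ 0 := fun k => by
    exact_mod_cast (Nat.factorial_pos k).ne'
  rcases b with _ | c
  · -- b = 0 : i = n - 1
    simp only [Nat.add_zero, Nat.add_sub_cancel]
    rw [Nat.choose_eq_zero_of_lt (by omega), Nat.choose_self,
      Nat.choose_succ_self_right]
    simp only [Nat.factorial_succ, Nat.factorial_zero, Nat.factorial_one, Nat.add_zero]
    push_cast
    field_simp
    ring
  · -- b = c + 1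
    have hc1 : ((a + c + 2).choose (a + 2) : ℚ) =
        (Nat.factorial (a + c + 2) : ℚ) /
          ((Nat.factorial (a + 2) : ℚ) * (Nat.factorial c : ℚ)) := by
      have : a + c + 2 - (a + 2) = c := by omega
      rw [Nat.cast_choose ℚ (by omega : a + 2 ≤ a + c + 2), this]
    have hc2 : ((a + c + 2).choose (a + 1) : ℚ) =
        (Nat.factorial (a + c + 2) : ℚ) /
          ((Nat.factorial (a + 1) : ℚ) * (Nat.factorial (c + 1) : ℚ)) := by
      have : a + c + 2 - (a + 1) = c + 1 := by omega
      rw [Nat.cast_choose ℚ (by omega : a + 1 ≤ a + c + 2), this]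
    have hc3 : ((a + c + 2).choose a : ℚ) =
        (Nat.factorial (a + c + 2) : ℚ) /
          ((Nat.factorial a : ℚ) * (Nat.factorial (c + 2) : ℚ)) := by
      have : a + c + 2 - a = c + 2 := by omega
      rw [Nat.cast_choose ℚ (by omega : a ≤ a + c + 2), this]
    have e7 : a + (c + 1) + 1 = a + c + 2 := by omega
    have e8 : a + (c + 1) = a + c + 1 := by omega
    have e9 : a + 1 - 1 = a := by omega
    have e10 : c + 1 + 1 = c + 2 := by omega
    rw [e7, e8, e9, e10, hc1, hc2, hc3]
    have f1 : (Nat.factorial (a + c + 2) : ℚ) =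
        ((a : ℚ) + c + 2) * ((a : ℚ) + c + 1) * (Nat.factorial (a + c) : ℚ) := by
      have : a + c + 2 = (a + c) + 1 + 1 := by omega
      rw [this, Nat.factorial_succ, Nat.factorial_succ]
      push_cast
      ring
    have f2 : (Nat.factorial (a + c + 1) : ℚ) =
        ((a : ℚ) + c + 1) * (Nat.factorial (a + c) : ℚ) := by
      rw [Nat.factorial_succ]; push_cast; ring
    have f3 : (Nat.factorial (a + 2) : ℚ) =
        ((a : ℚ) + 2) * ((a : ℚ) + 1) * (Nat.factorial a : ℚ) := by
      have : a + 2 = a + 1 + 1 := by omega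
      rw [this, Nat.factorial_succ, Nat.factorial_succ]; push_cast; ring
    have f4 : (Nat.factorial (a + 1) : ℚ) = ((a : ℚ) + 1) * (Nat.factorial a : ℚ) := by
      rw [Nat.factorial_succ]; push_cast; ring
    have f5 : (Nat.factorial (c + 2) : ℚ) =
        ((c : ℚ) + 2) * ((c : ℚ) + 1) * (Nat.factorial c : ℚ) := by
      have : c + 2 = c + 1 + 1 := by omega
      rw [this, Nat.factorial_succ, Nat.factorial_succ]; push_cast; ring
    have f6 : (Nat.factorial (c + 1) : ℚ) = ((c : ℚ) + 1) * (Nat.factorial c : ℚ) := by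
      rw [Nat.factorial_succ]; push_cast; ring
    rw [f1, f2, f3, f4, f5, f6]
    push_cast
    field_simp
    ring
end

section
/- Define ĝ(m,a,b) := g(m,a,b) if m ≥ 3 and 1 ≤ a ≤ b ≤ m (note a = b is allowed, using the same closed formula), ĝ(2,1,2) := 1, and ĝ(m,a,b) := 0 in all other cases. Then for all integers n ≥ 4 and 1 ≤ i < j ≤ n: ĝ(n,i,j) = ĝ(n−1,i,j) + ĝ(n−1,i−1,j) + ĝ(n−1,i,j−1) + ĝ(n−1,i−1,j−1). (This is 4-neighbor addition without exceptions for the extended Gr_2-simplex.) -/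
/-- `ĝ(m,a,b)`: equal to `g(m,a,b)` if `m ≥ 3` and `1 ≤ a ≤ b ≤ m` (allowing `a = b`),
equal to `1` if `(m,a,b) = (2,1,2)`, and `0` otherwise. -/
def ghat (m a b : ℕ) : ℚ :=
  if 3 ≤ m ∧ 1 ≤ a ∧ a ≤ b ∧ b ≤ m then gval m a b
  else if m = 2 ∧ a = 1 ∧ b = 2 then 1 else 0

lemma ghat_eq_gval (m a b : ℕ) (h3 : 3 ≤ m) (h1 : 1 ≤ a) (hab : a ≤ b) (hbm : b ≤ m) :
    ghat m a b = gval m a b := by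
  unfold ghat; rw [if_pos ⟨h3, h1, hab, hbm⟩]

lemma ghat_zero_left (m b : ℕ) : ghat m 0 b = 0 := by
  unfold ghat; rw [if_neg (by omega), if_neg (by omega)]

lemma ghat_zero_gt (m a b : ℕ) (h : m < b) : ghat m a b = 0 := by
  unfold ghat; rw [if_neg (by omega), if_neg (by omega)]

lemma gval_formula (n i1 i2 p q r s t u : ℕ) (h2 : n - 2 = p) (h3 : n - 3 = q)
    (hr : i1 - 1 = r) (hs : i2 - 1 = s) (ht : n - i1 = t) (hu : n - i2 = u) :
    gval n i1 i2 =
      ((Nat.factorial p : ℚ) * (Nat.factorial q : ℚ)) /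
          ((Nat.factorial r : ℚ) * (Nat.factorial s : ℚ) *
            (Nat.factorial t : ℚ) * (Nat.factorial u : ℚ)) *
        (-3 * (i1 : ℚ) + (i2 : ℚ) - (i1 : ℚ) ^ 2 + 4 * (i1 : ℚ) * (i2 : ℚ) - (i2 : ℚ) ^ 2 +
          (n : ℚ) * (2 * ((i1 : ℚ) - 2 * (i2 : ℚ) + 1) + ((i2 : ℚ) - (i1 : ℚ)) ^ 2) +
          (n : ℚ) ^ 2 * ((i2 : ℚ) - (i1 : ℚ))) := by
  unfold gval; rw [h2, h3, hr, hs, ht, hu]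

lemma fc (x : ℕ) : ((Nat.factorial (x+1) : ℕ) : ℚ) = ((x:ℚ)+1) * Nat.factorial x := by
  rw [Nat.factorial_succ]; push_cast; ring

set_option maxHeartbeats 4000000 in
/-- 4-neighbor addition without exceptions for the extended `Gr_2`-simplex. -/
theorem four_neighbor_addition_extended (n i j : ℕ) (hn : 4 ≤ n) (h1 : 1 ≤ i)
    (hij : i < j) (hj : j ≤ n) :
    ghat n i j =
      ghat (n - 1) i j + ghat (n - 1) (i - 1) j + ghat (n - 1) i (j - 1) +
        ghat (n - 1) (i - 1) (j - 1) := by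
  by_cases hi1 : i = 1
  · subst hi1
    by_cases hjn : j = n
    · -- C4 : i = 1, j = n
      obtain ⟨m, rfl, rfl⟩ : ∃ m, j = m + 4 ∧ n = m + 4 := ⟨n - 4, by omega, by omega⟩
      simp only [show m+4-1 = m+3 from rfl, show (1:ℕ)-1 = 0 from rfl]
      rw [ghat_eq_gval (m+4) 1 (m+4) (by omega) (by omega) (by omega) (by omega),
        ghat_zero_gt (m+3) 1 (m+4) (by omega), ghat_zero_left (m+3) (m+4),
        ghat_eq_gval (m+3) 1 (m+3) (by omega) (by omega) (by omega) (by omega),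
        ghat_zero_left (m+3) (m+3),
        gval_formula (m+4) 1 (m+4) (m+2) (m+1) 0 (m+3) (m+3) 0
          (by omega) (by omega) (by omega) (by omega) (by omega) (by omega),
        gval_formula (m+3) 1 (m+3) (m+1) m 0 (m+2) (m+2) 0
          (by omega) (by omega) (by omega) (by omega) (by omega) (by omega)]
      have e1 : ((m+1).factorial : ℚ) = ((m:ℚ)+1) * m.factorial := fc m
      have e2 : ((m+2).factorial : ℚ) = ((m:ℚ)+2) * (((m:ℚ)+1) * m.factorial) := by
        rw [show m+2 = m+1+1 from rfl, fc, e1]; push_cast; ring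
      have e3 : ((m+3).factorial : ℚ) = ((m:ℚ)+3) * (((m:ℚ)+2) * (((m:ℚ)+1) * m.factorial)) := by
        rw [show m+3 = m+2+1 from rfl, fc, e2]; push_cast; ring
      have n1 : (m.factorial : ℚ) ≠ 0 := by positivity
      rw [e3, e2, e1]
      simp only [Nat.factorial_zero, Nat.cast_one]
      field_simp
      push_cast
      ring
    · by_cases hjn1 : j = n - 1
      · -- C3b : i = 1, j = n - 1
        obtain ⟨m, rfl, rfl⟩ : ∃ m, j = m + 3 ∧ n = m + 4 := ⟨n - 4, by omega, by omega⟩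
        simp only [show m+4-1 = m+3 from rfl, show m+3-1 = m+2 from rfl,
          show (1:ℕ)-1 = 0 from rfl]
        rw [ghat_eq_gval (m+4) 1 (m+3) (by omega) (by omega) (by omega) (by omega),
          ghat_eq_gval (m+3) 1 (m+3) (by omega) (by omega) (by omega) (by omega),
          ghat_zero_left (m+3) (m+3),
          ghat_eq_gval (m+3) 1 (m+2) (by omega) (by omega) (by omega) (by omega),
          ghat_zero_left (m+3) (m+2),
          gval_formula (m+4) 1 (m+3) (m+2) (m+1) 0 (m+2) (m+3) 1
            (by omega) (by omega) (by omega) (by omega) (by omega) (by omega),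
          gval_formula (m+3) 1 (m+3) (m+1) m 0 (m+2) (m+2) 0
            (by omega) (by omega) (by omega) (by omega) (by omega) (by omega),
          gval_formula (m+3) 1 (m+2) (m+1) m 0 (m+1) (m+2) 1
            (by omega) (by omega) (by omega) (by omega) (by omega) (by omega)]
        have e1 : ((m+1).factorial : ℚ) = ((m:ℚ)+1) * m.factorial := fc m
        have e2 : ((m+2).factorial : ℚ) = ((m:ℚ)+2) * (((m:ℚ)+1) * m.factorial) := by
          rw [show m+2 = m+1+1 from rfl, fc, e1]; push_cast; ring
        have e3 : ((m+3).factorial : ℚ) = ((m:ℚ)+3) * (((m:ℚ)+2) * (((m:ℚ)+1) * m.factorial)) := by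
          rw [show m+3 = m+2+1 from rfl, fc, e2]; push_cast; ring
        have n1 : (m.factorial : ℚ) ≠ 0 := by positivity
        rw [e3, e2, e1]
        simp only [Nat.factorial_zero, Nat.factorial_one, Nat.cast_one]
        field_simp
        push_cast
        ring
      · -- C3a : i = 1, 2 ≤ j ≤ n - 2
        obtain ⟨d, e, rfl, rfl⟩ : ∃ d e, j = d + 2 ∧ n = d + e + 4 :=
          ⟨j - 2, n - j - 2, by omega, by omega⟩
        simp only [show d+e+4-1 = d+e+3 from rfl, show d+2-1 = d+1 from rfl,
          show (1:ℕ)-1 = 0 from rfl]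
        rw [ghat_eq_gval (d+e+4) 1 (d+2) (by omega) (by omega) (by omega) (by omega),
          ghat_eq_gval (d+e+3) 1 (d+2) (by omega) (by omega) (by omega) (by omega),
          ghat_zero_left (d+e+3) (d+2),
          ghat_eq_gval (d+e+3) 1 (d+1) (by omega) (by omega) (by omega) (by omega),
          ghat_zero_left (d+e+3) (d+1),
          gval_formula (d+e+4) 1 (d+2) (d+e+2) (d+e+1) 0 (d+1) (d+e+3) (e+2)
            (by omega) (by omega) (by omega) (by omega) (by omega) (by omega),
          gval_formula (d+e+3) 1 (d+2) (d+e+1) (d+e) 0 (d+1) (d+e+2) (e+1)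
            (by omega) (by omega) (by omega) (by omega) (by omega) (by omega),
          gval_formula (d+e+3) 1 (d+1) (d+e+1) (d+e) 0 d (d+e+2) (e+2)
            (by omega) (by omega) (by omega) (by omega) (by omega) (by omega)]
        have eD : ((d+1).factorial : ℚ) = ((d:ℚ)+1) * d.factorial := fc d
        have e1 : ((d+e+1).factorial : ℚ) = ((d:ℚ)+(e:ℚ)+1) * (d+e).factorial := by
          rw [fc]; push_cast; ring
        have e2 : ((d+e+2).factorial : ℚ) = ((d:ℚ)+(e:ℚ)+2) * (((d:ℚ)+(e:ℚ)+1) * (d+e).factorial) := by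
          rw [show d+e+2 = d+e+1+1 from rfl, fc, e1]; push_cast; ring
        have e3 : ((d+e+3).factorial : ℚ) =
            ((d:ℚ)+(e:ℚ)+3) * (((d:ℚ)+(e:ℚ)+2) * (((d:ℚ)+(e:ℚ)+1) * (d+e).factorial)) := by
          rw [show d+e+3 = d+e+2+1 from rfl, fc, e2]; push_cast; ring
        have eE1 : ((e+1).factorial : ℚ) = ((e:ℚ)+1) * e.factorial := fc e
        have eE2 : ((e+2).factorial : ℚ) = ((e:ℚ)+2) * (((e:ℚ)+1) * e.factorial) := by
          rw [show e+2 = e+1+1 from rfl, fc, eE1]; push_cast; ring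
        have n1 : (d.factorial : ℚ) ≠ 0 := by positivity
        have n2 : ((d+e).factorial : ℚ) ≠ 0 := by positivity
        have n3 : (e.factorial : ℚ) ≠ 0 := by positivity
        rw [e3, e2, e1, eD, eE2, eE1]
        simp only [Nat.factorial_zero, Nat.cast_one]
        field_simp
        push_cast
        ring
  · by_cases hjn : j = n
    · by_cases hji : j = i + 1
      · -- C2b : j = i + 1 = n
        obtain ⟨a, rfl, rfl, rfl⟩ : ∃ a, i = a + 3 ∧ j = a + 4 ∧ n = a + 4 :=
          ⟨i - 3, by omega, by omega, by omega⟩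
        simp only [show a+4-1 = a+3 from rfl, show a+3-1 = a+2 from rfl]
        rw [ghat_eq_gval (a+4) (a+3) (a+4) (by omega) (by omega) (by omega) (by omega),
          ghat_zero_gt (a+3) (a+3) (a+4) (by omega),
          ghat_zero_gt (a+3) (a+2) (a+4) (by omega),
          ghat_eq_gval (a+3) (a+3) (a+3) (by omega) (by omega) (by omega) (by omega),
          ghat_eq_gval (a+3) (a+2) (a+3) (by omega) (by omega) (by omega) (by omega),
          gval_formula (a+4) (a+3) (a+4) (a+2) (a+1) (a+2) (a+3) 1 0
            (by omega) (by omega) (by omega) (by omega) (by omega) (by omega),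
          gval_formula (a+3) (a+3) (a+3) (a+1) a (a+2) (a+2) 0 0
            (by omega) (by omega) (by omega) (by omega) (by omega) (by omega),
          gval_formula (a+3) (a+2) (a+3) (a+1) a (a+1) (a+2) 1 0
            (by omega) (by omega) (by omega) (by omega) (by omega) (by omega)]
        have e1 : ((a+1).factorial : ℚ) = ((a:ℚ)+1) * a.factorial := fc a
        have e2 : ((a+2).factorial : ℚ) = ((a:ℚ)+2) * (((a:ℚ)+1) * a.factorial) := by
          rw [show a+2 = a+1+1 from rfl, fc, e1]; push_cast; ring
        have e3 : ((a+3).factorial : ℚ) = ((a:ℚ)+3) * (((a:ℚ)+2) * (((a:ℚ)+1) * a.factorial)) := by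
          rw [show a+3 = a+2+1 from rfl, fc, e2]; push_cast; ring
        have n1 : (a.factorial : ℚ) ≠ 0 := by positivity
        rw [e3, e2, e1]
        simp only [Nat.factorial_zero, Nat.factorial_one, Nat.cast_one]
        field_simp
        push_cast
        ring
      · -- C2a : i ≥ 2, j = n ≥ i + 2
        obtain ⟨a, f, rfl, rfl, rfl⟩ : ∃ a f, i = a + 2 ∧ j = a + f + 4 ∧ n = a + f + 4 :=
          ⟨i - 2, j - i - 2, by omega, by omega, by omega⟩
        simp only [show a+f+4-1 = a+f+3 from rfl, show a+2-1 = a+1 from rfl]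
        rw [ghat_eq_gval (a+f+4) (a+2) (a+f+4) (by omega) (by omega) (by omega) (by omega),
          ghat_zero_gt (a+f+3) (a+2) (a+f+4) (by omega),
          ghat_zero_gt (a+f+3) (a+1) (a+f+4) (by omega),
          ghat_eq_gval (a+f+3) (a+2) (a+f+3) (by omega) (by omega) (by omega) (by omega),
          ghat_eq_gval (a+f+3) (a+1) (a+f+3) (by omega) (by omega) (by omega) (by omega),
          gval_formula (a+f+4) (a+2) (a+f+4) (a+f+2) (a+f+1) (a+1) (a+f+3) (f+2) 0
            (by omega) (by omega) (by omega) (by omega) (by omega) (by omega),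
          gval_formula (a+f+3) (a+2) (a+f+3) (a+f+1) (a+f) (a+1) (a+f+2) (f+1) 0
            (by omega) (by omega) (by omega) (by omega) (by omega) (by omega),
          gval_formula (a+f+3) (a+1) (a+f+3) (a+f+1) (a+f) a (a+f+2) (f+2) 0
            (by omega) (by omega) (by omega) (by omega) (by omega) (by omega)]
        have eA : ((a+1).factorial : ℚ) = ((a:ℚ)+1) * a.factorial := fc a
        have e1 : ((a+f+1).factorial : ℚ) = ((a:ℚ)+(f:ℚ)+1) * (a+f).factorial := by
          rw [fc]; push_cast; ring
        have e2 : ((a+f+2).factorial : ℚ) = ((a:ℚ)+(f:ℚ)+2) * (((a:ℚ)+(f:ℚ)+1) * (a+f).factorial) := by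
          rw [show a+f+2 = a+f+1+1 from rfl, fc, e1]; push_cast; ring
        have e3 : ((a+f+3).factorial : ℚ) =
            ((a:ℚ)+(f:ℚ)+3) * (((a:ℚ)+(f:ℚ)+2) * (((a:ℚ)+(f:ℚ)+1) * (a+f).factorial)) := by
          rw [show a+f+3 = a+f+2+1 from rfl, fc, e2]; push_cast; ring
        have eF1 : ((f+1).factorial : ℚ) = ((f:ℚ)+1) * f.factorial := fc f
        have eF2 : ((f+2).factorial : ℚ) = ((f:ℚ)+2) * (((f:ℚ)+1) * f.factorial) := by
          rw [show f+2 = f+1+1 from rfl, fc, eF1]; push_cast; ring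
        have n1 : (a.factorial : ℚ) ≠ 0 := by positivity
        have n2 : ((a+f).factorial : ℚ) ≠ 0 := by positivity
        have n3 : (f.factorial : ℚ) ≠ 0 := by positivity
        rw [e3, e2, e1, eA, eF2, eF1]
        simp only [Nat.factorial_zero, Nat.cast_one]
        field_simp
        push_cast
        ring
    · -- C1 : interior case
      obtain ⟨a, d, e, rfl, rfl, rfl⟩ : ∃ a d e, i = a + 2 ∧ j = a + d + 3 ∧ n = a + d + e + 4 :=
        ⟨i - 2, j - i - 1, n - j - 1, by omega, by omega, by omega⟩
      simp only [show a+d+e+4-1 = a+d+e+3 from rfl, show a+2-1 = a+1 from rfl,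
        show a+d+3-1 = a+d+2 from rfl]
      rw [ghat_eq_gval (a+d+e+4) (a+2) (a+d+3) (by omega) (by omega) (by omega) (by omega),
        ghat_eq_gval (a+d+e+3) (a+2) (a+d+3) (by omega) (by omega) (by omega) (by omega),
        ghat_eq_gval (a+d+e+3) (a+1) (a+d+3) (by omega) (by omega) (by omega) (by omega),
        ghat_eq_gval (a+d+e+3) (a+2) (a+d+2) (by omega) (by omega) (by omega) (by omega),
        ghat_eq_gval (a+d+e+3) (a+1) (a+d+2) (by omega) (by omega) (by omega) (by omega),
        gval_formula (a+d+e+4) (a+2) (a+d+3) (a+d+e+2) (a+d+e+1) (a+1) (a+d+2) (d+e+2) (e+1)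
          (by omega) (by omega) (by omega) (by omega) (by omega) (by omega),
        gval_formula (a+d+e+3) (a+2) (a+d+3) (a+d+e+1) (a+d+e) (a+1) (a+d+2) (d+e+1) e
          (by omega) (by omega) (by omega) (by omega) (by omega) (by omega),
        gval_formula (a+d+e+3) (a+1) (a+d+3) (a+d+e+1) (a+d+e) a (a+d+2) (d+e+2) e
          (by omega) (by omega) (by omega) (by omega) (by omega) (by omega),
        gval_formula (a+d+e+3) (a+2) (a+d+2) (a+d+e+1) (a+d+e) (a+1) (a+d+1) (d+e+1) (e+1)
          (by omega) (by omega) (by omega) (by omega) (by omega) (by omega),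
        gval_formula (a+d+e+3) (a+1) (a+d+2) (a+d+e+1) (a+d+e) a (a+d+1) (d+e+2) (e+1)
          (by omega) (by omega) (by omega) (by omega) (by omega) (by omega)]
      have hA : ((a+1).factorial : ℚ) = ((a:ℚ)+1) * a.factorial := fc a
      have hS : ((a+d+2).factorial : ℚ) = ((a:ℚ)+(d:ℚ)+2) * (a+d+1).factorial := by
        rw [show a+d+2 = a+d+1+1 from rfl, fc]; push_cast; ring
      have hP1 : ((a+d+e+1).factorial : ℚ) = ((a:ℚ)+(d:ℚ)+(e:ℚ)+1) * (a+d+e).factorial := by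
        rw [fc]; push_cast; ring
      have hP2 : ((a+d+e+2).factorial : ℚ) =
          ((a:ℚ)+(d:ℚ)+(e:ℚ)+2) * (((a:ℚ)+(d:ℚ)+(e:ℚ)+1) * (a+d+e).factorial) := by
        rw [show a+d+e+2 = a+d+e+1+1 from rfl, fc, hP1]; push_cast; ring
      have hT : ((d+e+2).factorial : ℚ) = ((d:ℚ)+(e:ℚ)+2) * (d+e+1).factorial := by
        rw [show d+e+2 = d+e+1+1 from rfl, fc]; push_cast; ring
      have hU : ((e+1).factorial : ℚ) = ((e:ℚ)+1) * e.factorial := fc e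
      have n1 : (a.factorial : ℚ) ≠ 0 := by positivity
      have n2 : ((a+d+1).factorial : ℚ) ≠ 0 := by positivity
      have n3 : ((a+d+e).factorial : ℚ) ≠ 0 := by positivity
      have n4 : ((d+e+1).factorial : ℚ) ≠ 0 := by positivity
      have n5 : (e.factorial : ℚ) ≠ 0 := by positivity
      rw [hP2, hP1, hA, hS, hT, hU]
      field_simp
      push_cast
      ring
end
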